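/- arXiv:math/0601032 — 5 statements merged into one kernel-verified Lean document; each statement's English description precedes it below -/
import Mathlib

section
/- Let 1 < α < 2 and define ζ_k = α Γ(k+1−α) / ((k+1)! Γ(2−α)) for positive integers k. Then Σ_{k=1}^∞ ζ_k = 1. -/
open Real Filter

/-- For `1 < α < 2` and `ζ_k = α Γ(k+1-α)/((k+1)! Γ(2-α))` for `k ≥ 1`,
one has `Σ_{k=1}^∞ ζ_k = 1` (here the sum is indexed by `k = j + 1`, `j : ℕ`). -/
theorem stmt8 (α : ℝ) (hα1 : 1 < α) (hα2 : α < 2) :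
    ∑' j : ℕ, α * Gamma (((j : ℝ) + 1) + 1 - α) /
      ((Nat.factorial (j + 1 + 1) : ℝ) * Gamma (2 - α)) = 1 := by
  have hΓ2 : 0 < Gamma (2 - α) := Gamma_pos_of_pos (by linarith)
  have hα1' : (0:ℝ) < α - 1 := by linarith
  have hpos : ∀ n : ℕ, (0:ℝ) < (n:ℝ) + 2 - α := fun n => by
    have : (0:ℝ) ≤ n := Nat.cast_nonneg n
    linarith
  have hΓpos : ∀ n : ℕ, 0 < Gamma ((n:ℝ) + 2 - α) := fun n => Gamma_pos_of_pos (hpos n)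
  have hfac : ∀ n : ℕ, (0:ℝ) < (Nat.factorial n : ℝ) := fun n =>
    Nat.cast_pos.mpr n.factorial_pos
  set g : ℕ → ℝ := fun n =>
    Gamma ((n:ℝ) + 2 - α) / ((α - 1) * (Nat.factorial (n+1) : ℝ) * Gamma (2 - α)) with hg
  -- recurrence for Gamma
  have hrec : ∀ n : ℕ, Gamma ((n:ℝ) + 1 + 2 - α) = ((n:ℝ) + 2 - α) * Gamma ((n:ℝ) + 2 - α) := by
    intro n
    have h1 : (n:ℝ) + 1 + 2 - α = ((n:ℝ) + 2 - α) + 1 := by ring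
    rw [h1, Gamma_add_one (ne_of_gt (hpos n))]
  -- each term equals the telescoping difference
  have hstep : ∀ j : ℕ, α * Gamma (((j : ℝ) + 1) + 1 - α) /
      ((Nat.factorial (j + 1 + 1) : ℝ) * Gamma (2 - α)) = (α - 1) * (g j - g (j+1)) := by
    intro j
    have harg : ((j : ℝ) + 1) + 1 - α = (j:ℝ) + 2 - α := by ring
    have hfac2 : (Nat.factorial (j + 1 + 1) : ℝ) = ((j:ℝ) + 2) * (Nat.factorial (j+1) : ℝ) := by
      have : j + 1 + 1 = (j + 1) + 1 := rfl
      rw [this, Nat.factorial_succ]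
      push_cast
      ring
    simp only [hg]
    push_cast
    rw [harg, hfac2, hrec j]
    have h1 : (Nat.factorial (j+1) : ℝ) ≠ 0 := ne_of_gt (hfac _)
    have h2 : Gamma (2 - α) ≠ 0 := ne_of_gt hΓ2
    have h3 : (α - 1) ≠ 0 := ne_of_gt hα1'
    have h4 : ((j:ℝ) + 2) ≠ 0 := by positivity
    field_simp
    ring
  -- bound: (n+1) * Γ(n+2-α) ≤ Γ(2-α) * (n+1)!
  have hbd : ∀ n : ℕ, ((n:ℝ) + 1) * Gamma ((n:ℝ) + 2 - α) ≤
      Gamma (2 - α) * (Nat.factorial (n+1) : ℝ) := by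
    intro n
    induction n with
    | zero => simp
    | succ m ih =>
      have h1 : ((m+1 : ℕ):ℝ) + 2 - α = (m:ℝ) + 1 + 2 - α := by push_cast; ring
      have h2 : (Nat.factorial (m+1+1) : ℝ) = ((m:ℝ) + 2) * (Nat.factorial (m+1) : ℝ) := by
        rw [Nat.factorial_succ]; push_cast; ring
      rw [h1, hrec m, h2]
      push_cast
      have hle : (m:ℝ) + 2 - α ≤ (m:ℝ) + 1 := by linarith
      have hΓ := (hΓpos m).le
      calc ((m:ℝ) + 1 + 1) * (((m:ℝ) + 2 - α) * Gamma ((m:ℝ) + 2 - α))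
          ≤ ((m:ℝ) + 2) * (((m:ℝ) + 1) * Gamma ((m:ℝ) + 2 - α)) := by nlinarith [mul_le_mul_of_nonneg_right hle hΓ]
        _ ≤ ((m:ℝ) + 2) * (Gamma (2 - α) * (Nat.factorial (m+1) : ℝ)) := by
            exact mul_le_mul_of_nonneg_left ih (by positivity)
        _ = Gamma (2 - α) * (((m:ℝ) + 2) * (Nat.factorial (m+1) : ℝ)) := by ring
  -- (α-1) * g n ≤ 1/(n+1)
  have hgle : ∀ n : ℕ, (α - 1) * g n ≤ 1 / ((n:ℝ) + 1) := by
    intro n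
    have hgn : (α - 1) * g n =
        Gamma ((n:ℝ) + 2 - α) / ((Nat.factorial (n+1) : ℝ) * Gamma (2 - α)) := by
      simp only [hg]
      field_simp
    rw [hgn, div_le_div_iff₀ (by positivity) (by positivity)]
    have hfle : (Nat.factorial (n+1) : ℝ) ≤ (Nat.factorial (n+1) : ℝ) * ((n:ℝ)+1) / ((n:ℝ)+1) := by
      field_simp
      exact le_refl _
    nlinarith [hbd n]
  have hgnonneg : ∀ n : ℕ, 0 ≤ (α - 1) * g n := fun n => by
    have : 0 < g n := div_pos (hΓpos n) (by positivity)
    positivity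
  have hterm_nonneg : ∀ j : ℕ, 0 ≤ α * Gamma (((j : ℝ) + 1) + 1 - α) /
      ((Nat.factorial (j + 1 + 1) : ℝ) * Gamma (2 - α)) := by
    intro j
    have harg : ((j : ℝ) + 1) + 1 - α = (j:ℝ) + 2 - α := by ring
    rw [harg]
    have := hΓpos j
    have := hfac (j+1+1)
    positivity
  -- partial sums
  have hsum : ∀ n : ℕ, ∑ j ∈ Finset.range n, (α * Gamma (((j : ℝ) + 1) + 1 - α) /
      ((Nat.factorial (j + 1 + 1) : ℝ) * Gamma (2 - α))) = 1 - (α - 1) * g n := by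
    intro n
    have : ∀ j ∈ Finset.range n, α * Gamma (((j : ℝ) + 1) + 1 - α) /
        ((Nat.factorial (j + 1 + 1) : ℝ) * Gamma (2 - α)) =
        (α - 1) * g j - (α - 1) * g (j+1) := fun j _ => by rw [hstep j]; ring
    rw [Finset.sum_congr rfl this, Finset.sum_range_sub' (fun j => (α - 1) * g j) n]
    have hg0 : (α - 1) * g 0 = 1 := by
      simp only [hg]
      norm_num
      field_simp
    rw [hg0]
  -- limit
  have hlim : Tendsto (fun n : ℕ => (α - 1) * g n) atTop (nhds 0) :=
    squeeze_zero hgnonneg hgle tendsto_one_div_add_atTop_nhds_zero_nat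
  have hHasSum : HasSum (fun j : ℕ => α * Gamma (((j : ℝ) + 1) + 1 - α) /
      ((Nat.factorial (j + 1 + 1) : ℝ) * Gamma (2 - α))) 1 := by
    rw [hasSum_iff_tendsto_nat_of_nonneg hterm_nonneg]
    simp only [hsum]
    have : Tendsto (fun n : ℕ => 1 - (α - 1) * g n) atTop (nhds (1 - 0)) :=
      tendsto_const_nhds.sub hlim
    simpa using this
  exact hHasSum.tsum_eq
end

section
/- Let 1 < α < 2 and define ζ_k = α Γ(k+1−α) / ((k+1)! Γ(2−α)) for positive integers k. Then Σ_{k=1}^∞ k·ζ_k = 1/(α−1). -/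
open Real

/-- For `1 < α < 2` and `ζ_k = α Γ(k+1-α)/((k+1)! Γ(2-α))` for `k ≥ 1`,
one has `Σ_{k=1}^∞ k ζ_k = 1/(α-1)` (here the sum is indexed by `k = j + 1`, `j : ℕ`). -/
theorem stmt9 (α : ℝ) (hα1 : 1 < α) (hα2 : α < 2) :
    ∑' j : ℕ, ((j : ℝ) + 1) * (α * Gamma (((j : ℝ) + 1) + 1 - α) /
      ((Nat.factorial (j + 1 + 1) : ℝ) * Gamma (2 - α))) = 1 / (α - 1) := by
  have hα1' : (0:ℝ) < α - 1 := by linarith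
  have hΓ2 : 0 < Gamma (2 - α) := Gamma_pos_of_pos (by linarith)
  set f : ℕ → ℝ := fun j => ((j : ℝ) + 1) * (α * Gamma (((j : ℝ) + 1) + 1 - α) /
      ((Nat.factorial (j + 1 + 1) : ℝ) * Gamma (2 - α))) with hf
  set g : ℕ → ℝ := fun j => (α * ((j:ℝ) + 1) / (α - 1) - 1) * Gamma ((j:ℝ) + 2 - α) /
      ((Nat.factorial (j + 1) : ℝ) * Gamma (2 - α)) with hg
  -- telescoping identity
  have hfg : ∀ j : ℕ, f j = g j - g (j + 1) := by
    intro j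
    have hpos : (0:ℝ) < (j:ℝ) + 2 - α := by linarith
    have hrec : Gamma ((j:ℝ) + 1 + 2 - α) = ((j:ℝ) + 2 - α) * Gamma ((j:ℝ) + 2 - α) := by
      rw [show (j:ℝ) + 1 + 2 - α = ((j:ℝ) + 2 - α) + 1 by ring, Gamma_add_one (ne_of_gt hpos)]
    have hfac2 : (Nat.factorial (j + 1 + 1) : ℝ) = ((j:ℝ) + 2) * (Nat.factorial (j + 1) : ℝ) := by
      rw [Nat.factorial_succ]; push_cast; ring
    have hfacpos : (0:ℝ) < (Nat.factorial (j + 1) : ℝ) := by positivity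
    simp only [hf, hg]
    push_cast
    rw [show ((j:ℝ) + 1) + 1 - α = (j:ℝ) + 2 - α by ring, hrec, hfac2]
    field_simp
    ring
  have hg0 : g 0 = 1 / (α - 1) := by
    simp only [hg]
    norm_num
    field_simp
    ring
  -- nonnegativity of f
  have hfnonneg : ∀ j : ℕ, 0 ≤ f j := by
    intro j
    have h1 : 0 < Gamma (((j:ℝ) + 1) + 1 - α) := Gamma_pos_of_pos (by linarith)
    have h2 : (0:ℝ) < (Nat.factorial (j + 1 + 1) : ℝ) := by positivity
    have : (0:ℝ) < α := by linarith
    positivity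
  -- g tends to 0
  have hgnonneg : ∀ j : ℕ, 0 ≤ g j := by
    intro j
    have h1 : 0 < Gamma ((j:ℝ) + 2 - α) := Gamma_pos_of_pos (by linarith)
    have h2 : (0:ℝ) < (Nat.factorial (j + 1) : ℝ) := by positivity
    have h3 : (0:ℝ) ≤ α * ((j:ℝ) + 1) / (α - 1) - 1 := by
      rw [sub_nonneg, le_div_iff₀ hα1']
      nlinarith [Nat.cast_nonneg (α := ℝ) j]
    positivity
  have hbound : ∀ j : ℕ, 1 ≤ j →
      g j ≤ (α / ((α - 1) * Gamma (2 - α))) * (j:ℝ) ^ (1 - α) := by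
    intro j hj
    have hj0 : (0:ℝ) < (j:ℝ) := by exact_mod_cast hj
    have hΓj : 0 < Gamma (j:ℝ) := Gamma_pos_of_pos hj0
    have hΓj1 : 0 < Gamma ((j:ℝ) + 1) := Gamma_pos_of_pos (by linarith)
    -- log-convexity bound: Γ(j+2-α) ≤ Γ(j)^(α-1) * Γ(j+1)^(2-α)
    have hconv := convexOn_log_Gamma.2 (Set.mem_Ioi.mpr hj0)
      (Set.mem_Ioi.mpr (by linarith : (0:ℝ) < (j:ℝ) + 1))
      (by linarith : (0:ℝ) ≤ α - 1) (by linarith : (0:ℝ) ≤ 2 - α) (by ring)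
    have hcomb : (α - 1) • (j:ℝ) + (2 - α) • ((j:ℝ) + 1) = (j:ℝ) + 2 - α := by
      simp [smul_eq_mul]; ring
    rw [hcomb] at hconv
    simp only [Function.comp_apply, smul_eq_mul] at hconv
    have hkey : Gamma ((j:ℝ) + 2 - α) ≤ Gamma (j:ℝ) * (j:ℝ) ^ (2 - α) := by
      have hΓc : 0 < Gamma ((j:ℝ) + 2 - α) := Gamma_pos_of_pos (by linarith)
      have := Real.exp_le_exp.mpr hconv
      rw [Real.exp_log hΓc] at this
      calc Gamma ((j:ℝ) + 2 - α)
          ≤ Real.exp ((α - 1) * Real.log (Gamma (j:ℝ)) + (2 - α) * Real.log (Gamma ((j:ℝ) + 1))) := this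
        _ = Gamma (j:ℝ) ^ (α - 1) * Gamma ((j:ℝ) + 1) ^ (2 - α) := by
            rw [Real.exp_add, Real.rpow_def_of_pos hΓj, Real.rpow_def_of_pos hΓj1,
              mul_comm (Real.log (Gamma (j:ℝ))), mul_comm (Real.log (Gamma ((j:ℝ) + 1)))]
        _ = Gamma (j:ℝ) * (j:ℝ) ^ (2 - α) := by
            rw [Gamma_add_one (ne_of_gt hj0), Real.mul_rpow hj0.le hΓj.le,
              mul_comm ((j:ℝ) ^ (2 - α)) (Gamma (j:ℝ) ^ (2 - α)), ← mul_assoc,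
              ← Real.rpow_add hΓj, show (α - 1) + (2 - α) = 1 by ring, Real.rpow_one]
    -- rewrite the factorial
    have hfac : (Nat.factorial (j + 1) : ℝ) = ((j:ℝ) + 1) * (j:ℝ) * Gamma (j:ℝ) := by
      have h1 : Gamma ((j:ℝ) + 1) = (Nat.factorial j : ℝ) := by
        exact_mod_cast Real.Gamma_nat_eq_factorial j
      rw [Nat.factorial_succ]
      push_cast
      rw [← h1, Gamma_add_one (ne_of_gt hj0)]
      ring
    have hcoef : 0 ≤ α * ((j:ℝ) + 1) / (α - 1) := by positivity
    have hr2 : (j:ℝ) ^ (2 - α) = (j:ℝ) ^ (1 - α) * (j:ℝ) := by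
      rw [show (2:ℝ) - α = (1 - α) + 1 by ring, Real.rpow_add hj0, Real.rpow_one]
    have hrpos : (0:ℝ) < (j:ℝ) ^ (1 - α) := Real.rpow_pos_of_pos hj0 _
    calc g j = (α * ((j:ℝ) + 1) / (α - 1) - 1) * Gamma ((j:ℝ) + 2 - α) /
          ((Nat.factorial (j + 1) : ℝ) * Gamma (2 - α)) := rfl
      _ ≤ (α * ((j:ℝ) + 1) / (α - 1)) * (Gamma (j:ℝ) * (j:ℝ) ^ (2 - α)) /
          ((Nat.factorial (j + 1) : ℝ) * Gamma (2 - α)) := by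
          apply div_le_div_of_nonneg_right ?_ (by positivity)
          apply mul_le_mul (by linarith) hkey (Gamma_pos_of_pos (by linarith)).le hcoef
      _ = (α / ((α - 1) * Gamma (2 - α))) * (j:ℝ) ^ (1 - α) := by
          rw [hfac, hr2]
          field_simp
  have hgtend : Filter.Tendsto g Filter.atTop (nhds 0) := by
    have htend : Filter.Tendsto (fun j : ℕ => (α / ((α - 1) * Gamma (2 - α))) * (j:ℝ) ^ (1 - α))
        Filter.atTop (nhds 0) := by
      have h1 : Filter.Tendsto (fun j : ℕ => (j:ℝ) ^ (1 - α)) Filter.atTop (nhds 0) := by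
        have := (tendsto_rpow_neg_atTop (by linarith : (0:ℝ) < α - 1)).comp
          tendsto_natCast_atTop_atTop (α := ℕ)
        simpa [Function.comp_def, show -(α - 1) = 1 - α by ring] using this
      simpa using h1.const_mul (α / ((α - 1) * Gamma (2 - α)))
    apply squeeze_zero' (Filter.Eventually.of_forall hgnonneg) ?_ htend
    filter_upwards [Filter.eventually_ge_atTop 1] with j hj using hbound j hj
  -- conclude
  have hsum : HasSum f (1 / (α - 1)) := by
    rw [hasSum_iff_tendsto_nat_of_nonneg hfnonneg]
    have : ∀ n : ℕ, ∑ i ∈ Finset.range n, f i = g 0 - g n := by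
      intro n
      rw [show (∑ i ∈ Finset.range n, f i) = ∑ i ∈ Finset.range n, (g i - g (i + 1)) from
        Finset.sum_congr rfl fun i _ => hfg i, Finset.sum_range_sub' g n]
    simp only [this, hg0]
    simpa using (tendsto_const_nhds (x := (1:ℝ)/(α-1))).sub hgtend
  exact hsum.tsum_eq
end

section
/- Let 1 < α < 2 and suppose f : (0,1] → (0,∞) satisfies C₁ x^{1−α} ≤ f(x) ≤ C₂ x^{1−α} for all x ∈ (0,1], where 0 < C₁ ≤ C₂ < ∞. Define λ_{n,k} = ∫₀¹ x^{k−2}(1−x)^{n−k} f(x) dx for 2 ≤ k ≤ n, λ_n = Σ_{k=2}^n C(n,k) λ_{n,k}, and ζ_{n,k} = C(n,k+1) λ_{n,k+1}/λ_n for 1 ≤ k ≤ n−1. Then there is a constant C (depending on α, C₁, C₂ but not on n or k) such that ζ_{n,k} ≤ C k^{−1−α} for all n and all 1 ≤ k ≤ n−1. -/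
open MeasureTheory

noncomputable def Jb (u v : ℝ) : ℝ := ∫ x in (0:ℝ)..1, x ^ (u-1) * (1-x) ^ (v-1)

lemma Jb_aux (u v x : ℝ) (hx : 0 ≤ x) (hx1 : x ≤ 1) :
    (x:ℂ) ^ ((u:ℂ) - 1) * (1 - (x:ℂ)) ^ ((v:ℂ)-1) = ((x ^ (u-1) * (1-x)^(v-1) : ℝ) : ℂ) := by
  rw [show ((u:ℂ)-1) = ((u-1:ℝ):ℂ) by push_cast; ring,
    show ((v:ℂ)-1) = ((v-1:ℝ):ℂ) by push_cast; ring,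
    show (1 - (x:ℂ)) = ((1-x:ℝ):ℂ) by push_cast; ring,
    ← Complex.ofReal_cpow hx, ← Complex.ofReal_cpow (by linarith : (0:ℝ) ≤ 1 - x),
    Complex.ofReal_mul]

lemma Jb_eq_complex (u v : ℝ) : (Complex.betaIntegral u v) = (Jb u v : ℂ) := by
  rw [Complex.betaIntegral, Jb, ← intervalIntegral.integral_ofReal]
  refine intervalIntegral.integral_congr fun x hx => ?_
  rw [Set.uIcc_of_le (by norm_num : (0:ℝ) ≤ 1)] at hx
  exact Jb_aux u v x hx.1 hx.2

lemma Jb_integrable {u v : ℝ} (hu : 0 < u) (hv : 0 < v) :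
    IntervalIntegrable (fun x : ℝ => x ^ (u-1) * (1-x) ^ (v-1)) volume 0 1 := by
  have h := Complex.betaIntegral_convergent (u := u) (v := v) (by simpa) (by simpa)
  have h2 : IntervalIntegrable (fun x : ℝ => ((x:ℂ) ^ ((u:ℂ)-1) * (1 - (x:ℂ)) ^ ((v:ℂ)-1)).re)
      volume 0 1 := ⟨h.1.re, h.2.re⟩
  refine h2.congr ?_
  rw [Set.uIoc_of_le (by norm_num : (0:ℝ) ≤ 1)]
  intro x hx
  dsimp only
  rw [Jb_aux u v x hx.1.le hx.2, Complex.ofReal_re]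

lemma Jb_recurrence {u v : ℝ} (hu : 0 < u) (hv : 0 < v) :
    Jb (u+1) v = (u / v) * Jb u (v+1) := by
  have h := Complex.betaIntegral_recurrence (u := u) (v := v) (by simpa) (by simpa)
  rw [show ((u:ℂ) + 1) = ((u+1:ℝ):ℂ) by push_cast; ring,
    show ((v:ℂ) + 1) = ((v+1:ℝ):ℂ) by push_cast; ring,
    Jb_eq_complex, Jb_eq_complex] at h
  have h' : (u:ℂ) * (Jb u (v+1) : ℂ) = (v:ℂ) * (Jb (u+1) v : ℂ) := h
  have : (u * Jb u (v+1) : ℝ) = (v * Jb (u+1) v : ℝ) := by exact_mod_cast h'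
  field_simp
  linarith

lemma Jb_pos {u v : ℝ} (hu : 0 < u) (hv : 0 < v) : 0 < Jb u v := by
  rw [Jb]
  apply intervalIntegral.intervalIntegral_pos_of_pos_on (Jb_integrable hu hv)
  · intro x hx
    exact mul_pos (Real.rpow_pos_of_pos hx.1 _) (Real.rpow_pos_of_pos (by linarith [hx.2]) _)
  · norm_num

lemma prod_bound (α : ℝ) (hα1 : 1 < α) (hα2 : α < 2) : ∀ k : ℕ, 1 ≤ k →
    ∏ j ∈ Finset.Icc 2 k, (((j:ℝ)-α)/((j:ℝ)+1)) ≤ 8 * ((k:ℝ)+1) ^ (-(1+α)) := by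
  intro k hk
  induction k with
  | zero => omega
  | succ m ih =>
    rcases Nat.eq_or_lt_of_le hk with h1 | h1
    · have hm : m = 0 := by omega
      subst hm
      simp only [Finset.Icc_eq_empty (by norm_num : ¬ (2:ℕ) ≤ 1), Finset.prod_empty]
      have h8 : (2:ℝ) ^ (1+α) ≤ 8 := by
        calc (2:ℝ) ^ (1+α) ≤ 2 ^ (3:ℝ) :=
              Real.rpow_le_rpow_of_exponent_le (by norm_num) (by linarith)
          _ = 8 := by
              rw [show (3:ℝ) = ((3:ℕ):ℝ) by norm_num, Real.rpow_natCast]; norm_num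
      have hpos : (0:ℝ) < 2 ^ (1+α) := Real.rpow_pos_of_pos (by norm_num) _
      push_cast
      rw [show ((1:ℝ) + 1) = 2 by norm_num, Real.rpow_neg (by norm_num)]
      calc (1:ℝ) = 2 ^ (1+α) * (2 ^ (1+α))⁻¹ := (mul_inv_cancel₀ hpos.ne').symm
        _ ≤ 8 * (2 ^ (1+α))⁻¹ := by
            apply mul_le_mul_of_nonneg_right h8 (by positivity)
    · have hm : 1 ≤ m := by omega
      have ihm := ih hm
      rw [Finset.prod_Icc_succ_top (by omega : 2 ≤ m + 1)]
      push_cast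
      set a : ℝ := (m:ℝ) with ha
      have ha0 : 0 ≤ a := Nat.cast_nonneg m
      have ha2 : (0:ℝ) < a + 2 := by linarith
      have hfac0 : 0 ≤ (a+1-α)/(a+1+1) := by
        apply div_nonneg _ (by linarith)
        have : (1:ℝ) ≤ a := by rw [ha]; exact_mod_cast hm
        linarith
      have hkey : (a+1-α)/(a+2) ≤ ((a+1)/(a+2)) ^ (1+α) := by
        have hd : 1/(a+2) ≤ 1 := by rw [div_le_one ha2]; linarith
        have hb := one_add_mul_self_le_rpow_one_add
          (s := -(1/(a+2))) (by linarith) (p := 1+α) (by linarith)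
        have e1 : (1:ℝ) + -(1/(a+2)) = (a+1)/(a+2) := by field_simp; ring
        have e2 : (1:ℝ) + (1+α) * -(1/(a+2)) = (a+1-α)/(a+2) := by field_simp; ring
        rw [e1, e2] at hb
        exact hb
      have hq : ((a+1)/(a+2)) ^ (1+α) = (a+1)^(1+α) * ((a+2)^(1+α))⁻¹ := by
        rw [Real.div_rpow (by linarith) (by linarith), div_eq_mul_inv]
      have h1pos : (0:ℝ) < (a+1) ^ (1+α) := Real.rpow_pos_of_pos (by linarith) _
      have h2pos : (0:ℝ) < (a+2) ^ (1+α) := Real.rpow_pos_of_pos ha2 _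
      calc (∏ j ∈ Finset.Icc 2 m, (((j:ℝ))-α)/((j:ℝ)+1)) * ((a+1-α)/(a+1+1))
          ≤ (8 * (a+1) ^ (-(1+α))) * ((a+1-α)/(a+1+1)) := by
            apply mul_le_mul_of_nonneg_right ihm hfac0
        _ ≤ (8 * (a+1) ^ (-(1+α))) * ((a+1)/(a+2)) ^ (1+α) := by
            apply mul_le_mul_of_nonneg_left _ (by positivity)
            rw [show a+1+1 = a+2 by ring]
            exact hkey
        _ = 8 * (a+1+1) ^ (-(1+α)) := by
            rw [hq, Real.rpow_neg (by linarith), Real.rpow_neg (by linarith),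
              show a+1+1 = a+2 by ring]
            field_simp

lemma tele (α : ℝ) (hα2 : α < 2) (n : ℕ) : ∀ k : ℕ, 1 ≤ k → k + 1 ≤ n →
    (n.choose (k+1) : ℝ) * Jb ((k:ℝ)+1-α) ((n:ℝ)-(k:ℝ)) =
    (n.choose 2 : ℝ) * Jb (2-α) ((n:ℝ)-1) * ∏ j ∈ Finset.Icc 2 k, (((j:ℝ)-α)/((j:ℝ)+1)) := by
  intro k
  induction k with
  | zero => omega
  | succ m ih =>
    intro hk hkn
    rcases Nat.eq_zero_or_pos m with hm | hm
    · subst hm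
      simp only [Finset.Icc_eq_empty (by norm_num : ¬ (2:ℕ) ≤ 1), Finset.prod_empty, mul_one]
      norm_num
    · have ihm := ih hm (by omega)
      have hm1 : (1:ℝ) ≤ (m:ℝ) := by exact_mod_cast hm
      have hu : (0:ℝ) < (m:ℝ)+1-α := by linarith
      have hn2 : ((m:ℝ)+2) ≤ (n:ℝ) := by exact_mod_cast hkn
      have hv : (0:ℝ) < (n:ℝ)-(m:ℝ)-1 := by linarith
      have hrec := Jb_recurrence hu hv
      have hch : (n.choose (m+1+1):ℝ) = (n.choose (m+1):ℝ) * ((n:ℝ)-(m:ℝ)-1) / ((m:ℝ)+2) := by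
        have h := Nat.choose_succ_right_eq n (m+1)
        have h2 : ((n.choose (m+1+1) : ℕ) : ℝ) * ((m:ℝ)+1+1) = (n.choose (m+1) : ℝ) * (((n - (m+1) : ℕ)) : ℝ) := by
          exact_mod_cast congrArg (Nat.cast : ℕ → ℝ) h
        rw [Nat.cast_sub (by omega : m+1 ≤ n)] at h2
        push_cast at h2
        field_simp
        linarith
      rw [Finset.prod_Icc_succ_top (by omega : 2 ≤ m+1), ← mul_assoc, ← ihm]
      push_cast
      rw [show (m:ℝ)+1+1-α = ((m:ℝ)+1-α)+1 by ring, show (n:ℝ)-((m:ℝ)+1) = (n:ℝ)-(m:ℝ)-1 by ring,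
        hrec, show (n:ℝ)-(m:ℝ)-1+1 = (n:ℝ)-(m:ℝ) by ring, hch]
      field_simp
      ring

/-- Lemma 7.1 -/
theorem stmt10 (α : ℝ) (hα1 : 1 < α) (hα2 : α < 2)
    (C₁ C₂ : ℝ) (hC₁ : 0 < C₁) (hC₁₂ : C₁ ≤ C₂)
    (f : ℝ → ℝ)
    (hf : ∀ x : ℝ, x ∈ Set.Ioc (0 : ℝ) 1 →
      C₁ * x ^ (1 - α) ≤ f x ∧ f x ≤ C₂ * x ^ (1 - α))
    (lam : ℕ → ℕ → ℝ)
    (hlam : ∀ n k : ℕ, lam n k = ∫ x in (0:ℝ)..1, x ^ ((k : ℝ) - 2) * (1 - x) ^ ((n : ℝ) - (k : ℝ)) * f x)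
    (lamTot : ℕ → ℝ)
    (hlamTot : ∀ n : ℕ, lamTot n = ∑ k ∈ Finset.Icc 2 n, (n.choose k : ℝ) * lam n k)
    (ζ : ℕ → ℕ → ℝ)
    (hζ : ∀ n k : ℕ, ζ n k = (n.choose (k + 1) : ℝ) * lam n (k + 1) / lamTot n) :
    ∃ C : ℝ, 0 < C ∧ ∀ n k : ℕ, 1 ≤ k → k ≤ n - 1 →
      ζ n k ≤ C * (k : ℝ) ^ (-(1 + α)) := by
  have hC₂ : 0 < C₂ := lt_of_lt_of_le hC₁ hC₁₂
  refine ⟨8 * C₂ / C₁, by positivity, ?_⟩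
  intro n k hk hkn'
  have hkn : k + 1 ≤ n := by omega
  have hn2 : 2 ≤ n := by omega
  have hk1 : (1:ℝ) ≤ (k:ℝ) := by exact_mod_cast hk
  have hkpos : (0:ℝ) < (k:ℝ) := by linarith
  have hrpos : (0:ℝ) < (k:ℝ) ^ (-(1+α)) := Real.rpow_pos_of_pos hkpos _
  -- nonnegativity of each lam term
  have hlam_nonneg : ∀ j : ℕ, 2 ≤ j → 0 ≤ lam n j := by
    intro j hj
    rw [hlam, intervalIntegral.integral_of_le (by norm_num : (0:ℝ) ≤ 1)]
    apply setIntegral_nonneg measurableSet_Ioc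
    intro x hx
    have hfx := (hf x hx).1
    have hf0 : 0 ≤ f x := le_trans (mul_nonneg hC₁.le (Real.rpow_nonneg hx.1.le _)) hfx
    have h1 : (0:ℝ) ≤ x ^ ((j:ℝ)-2) := Real.rpow_nonneg hx.1.le _
    have h2 : (0:ℝ) ≤ (1-x) ^ ((n:ℝ)-(j:ℝ)) := Real.rpow_nonneg (by linarith [hx.2]) _
    exact mul_nonneg (mul_nonneg h1 h2) hf0
  -- case split on integrability of the numerator integrand
  by_cases hInt : IntervalIntegrable
      (fun x : ℝ => x ^ (((k+1:ℕ) : ℝ) - 2) * (1 - x) ^ ((n : ℝ) - ((k+1:ℕ) : ℝ)) * f x)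
      volume 0 1
  case neg =>
    have : lam n (k+1) = 0 := by
      rw [hlam]; exact intervalIntegral.integral_undef hInt
    rw [hζ, this]
    simp only [mul_zero, zero_div]
    positivity
  case pos =>
  -- basic positivity for beta params
  have hu : (0:ℝ) < (k:ℝ)+1-α := by linarith
  have hv : (0:ℝ) < (n:ℝ)-(k:ℝ) := by
    have : ((k:ℝ)+1) ≤ (n:ℝ) := by exact_mod_cast hkn
    linarith
  have hu2 : (0:ℝ) < 2-α := by linarith
  have hv2 : (0:ℝ) < (n:ℝ)-1 := by
    have : ((2:ℕ):ℝ) ≤ (n:ℝ) := by exact_mod_cast hn2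
    push_cast at this; linarith
  have hIntOn : IntegrableOn
      (fun x : ℝ => x ^ (((k+1:ℕ) : ℝ) - 2) * (1 - x) ^ ((n : ℝ) - ((k+1:ℕ) : ℝ)) * f x)
      (Set.Ioc (0:ℝ) 1) volume := hInt.1
  -- numerator upper bound
  have hup : lam n (k+1) ≤ C₂ * Jb ((k:ℝ)+1-α) ((n:ℝ)-(k:ℝ)) := by
    rw [hlam, intervalIntegral.integral_of_le (by norm_num : (0:ℝ) ≤ 1)]
    have : C₂ * Jb ((k:ℝ)+1-α) ((n:ℝ)-(k:ℝ))
        = ∫ x in Set.Ioc (0:ℝ) 1, C₂ * (x ^ (((k:ℝ)+1-α)-1) * (1-x) ^ (((n:ℝ)-(k:ℝ))-1)) := by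
      rw [integral_const_mul, Jb, intervalIntegral.integral_of_le (by norm_num : (0:ℝ) ≤ 1)]
    rw [this]
    apply setIntegral_mono_on hIntOn ((Jb_integrable hu hv).1.const_mul C₂) measurableSet_Ioc
    intro x hx
    have hx0 : (0:ℝ) < x := hx.1
    have h1x : (0:ℝ) ≤ 1 - x := by linarith [hx.2]
    have hfx := (hf x hx).2
    have hmul : x ^ (((k+1:ℕ) : ℝ) - 2) * (1 - x) ^ ((n : ℝ) - ((k+1:ℕ) : ℝ)) * f x
        ≤ x ^ (((k+1:ℕ) : ℝ) - 2) * (1 - x) ^ ((n : ℝ) - ((k+1:ℕ) : ℝ)) * (C₂ * x ^ (1-α)) := by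
      apply mul_le_mul_of_nonneg_left hfx
      have := Real.rpow_nonneg hx0.le (((k+1:ℕ) : ℝ) - 2)
      have := Real.rpow_nonneg h1x ((n : ℝ) - ((k+1:ℕ) : ℝ))
      positivity
    refine le_trans hmul (le_of_eq ?_)
    rw [show ((k:ℝ)+1-α)-1 = (((k+1:ℕ) : ℝ) - 2) + (1-α) by push_cast; ring,
      show ((n:ℝ)-(k:ℝ))-1 = (n : ℝ) - ((k+1:ℕ) : ℝ) by push_cast; ring,
      Real.rpow_add hx0]
    ring
  -- a.e. measurability of f on (0,1]
  have hmeasf : AEStronglyMeasurable f (volume.restrict (Set.Ioc (0:ℝ) 1)) := by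
    have hφm : AEStronglyMeasurable
        (fun x : ℝ => (x ^ (((k+1:ℕ) : ℝ) - 2) * (1 - x) ^ ((n : ℝ) - ((k+1:ℕ) : ℝ)) * f x)
          * (x ^ (((k+1:ℕ) : ℝ) - 2))⁻¹ * ((1-x) ^ ((n : ℝ) - ((k+1:ℕ) : ℝ)))⁻¹)
        (volume.restrict (Set.Ioc (0:ℝ) 1)) := by
      apply AEStronglyMeasurable.mul
      apply AEStronglyMeasurable.mul hIntOn.aestronglyMeasurable
      · exact (Measurable.aestronglyMeasurable (by fun_prop))
      · exact (Measurable.aestronglyMeasurable (by fun_prop))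
    refine hφm.congr ?_
    have hne : ∀ᵐ (x:ℝ) ∂(volume.restrict (Set.Ioc (0:ℝ) 1)), x ≠ 1 := by
      apply ae_restrict_of_ae
      rw [ae_iff]
      simp only [ne_eq, not_not]
      simpa using (measure_singleton (1:ℝ) : volume ({1} : Set ℝ) = 0)
    filter_upwards [ae_restrict_mem measurableSet_Ioc, hne] with x hx hx1
    have hx0 : (0:ℝ) < x := hx.1
    have h1x : (0:ℝ) < 1 - x := by
      rcases lt_of_le_of_ne hx.2 hx1 with h; linarith
    have ha : x ^ (((k+1:ℕ) : ℝ) - 2) ≠ 0 := (Real.rpow_pos_of_pos hx0 _).ne'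
    have hb : (1-x) ^ ((n : ℝ) - ((k+1:ℕ) : ℝ)) ≠ 0 := (Real.rpow_pos_of_pos h1x _).ne'
    field_simp
  -- integrability of lam n 2 integrand
  have hmaj : IntegrableOn (fun x : ℝ => C₂ * x ^ (1-α)) (Set.Ioc (0:ℝ) 1) volume := by
    have := (intervalIntegral.intervalIntegrable_rpow' (a := 0) (b := 1)
      (by linarith : (-1:ℝ) < 1-α)).1
    exact this.const_mul C₂
  have hInt2 : IntegrableOn
      (fun x : ℝ => x ^ (((2:ℕ) : ℝ) - 2) * (1 - x) ^ ((n : ℝ) - ((2:ℕ) : ℝ)) * f x)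
      (Set.Ioc (0:ℝ) 1) volume := by
    apply Integrable.mono' hmaj
    · apply AEStronglyMeasurable.mul _ hmeasf
      exact (Measurable.aestronglyMeasurable (by fun_prop))
    · filter_upwards [ae_restrict_mem measurableSet_Ioc] with x hx
      have hx0 : (0:ℝ) < x := hx.1
      have h1x : (0:ℝ) ≤ 1 - x := by linarith [hx.2]
      have hfx := (hf x hx).2
      have hf0 : 0 ≤ f x := le_trans (by positivity) (hf x hx).1
      have h20 : x ^ (((2:ℕ) : ℝ) - 2) = 1 := by
        rw [show ((2:ℕ) : ℝ) - 2 = 0 by norm_num, Real.rpow_zero]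
      have hle1 : (1-x) ^ ((n : ℝ) - ((2:ℕ) : ℝ)) ≤ 1 := by
        apply Real.rpow_le_one h1x (by linarith [hx.2])
        push_cast
        have : ((2:ℝ)) ≤ (n:ℝ) := by exact_mod_cast hn2
        linarith
      have hge0 : 0 ≤ (1-x) ^ ((n : ℝ) - ((2:ℕ) : ℝ)) := Real.rpow_nonneg h1x _
      rw [h20, one_mul, Real.norm_eq_abs, abs_of_nonneg (by positivity)]
      calc (1-x) ^ ((n : ℝ) - ((2:ℕ) : ℝ)) * f x ≤ 1 * (C₂ * x ^ (1-α)) := by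
            apply mul_le_mul hle1 hfx hf0 zero_le_one
        _ = C₂ * x ^ (1-α) := by ring
  -- denominator lower bound
  have hlow : C₁ * Jb (2-α) ((n:ℝ)-1) ≤ lam n 2 := by
    rw [hlam, intervalIntegral.integral_of_le (by norm_num : (0:ℝ) ≤ 1)]
    have : C₁ * Jb (2-α) ((n:ℝ)-1)
        = ∫ x in Set.Ioc (0:ℝ) 1, C₁ * (x ^ ((2-α)-1) * (1-x) ^ (((n:ℝ)-1)-1)) := by
      rw [integral_const_mul, Jb, intervalIntegral.integral_of_le (by norm_num : (0:ℝ) ≤ 1)]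
    rw [this]
    apply setIntegral_mono_on ((Jb_integrable hu2 hv2).1.const_mul C₁) hInt2 measurableSet_Ioc
    intro x hx
    have hx0 : (0:ℝ) < x := hx.1
    have h1x : (0:ℝ) ≤ 1 - x := by linarith [hx.2]
    have hfx := (hf x hx).1
    have h20 : x ^ (((2:ℕ) : ℝ) - 2) = 1 := by
      rw [show ((2:ℕ) : ℝ) - 2 = 0 by norm_num, Real.rpow_zero]
    rw [h20, one_mul,
      show ((2:ℝ)-α)-1 = 1-α by ring,
      show ((n:ℝ)-1)-1 = (n : ℝ) - ((2:ℕ) : ℝ) by push_cast; ring]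
    have hge0 : 0 ≤ (1-x) ^ ((n : ℝ) - ((2:ℕ) : ℝ)) := Real.rpow_nonneg h1x _
    calc C₁ * (x ^ (1-α) * (1-x) ^ ((n : ℝ) - ((2:ℕ) : ℝ)))
        = (C₁ * x ^ (1-α)) * (1-x) ^ ((n : ℝ) - ((2:ℕ) : ℝ)) := by ring
      _ ≤ f x * (1-x) ^ ((n : ℝ) - ((2:ℕ) : ℝ)) := mul_le_mul_of_nonneg_right hfx hge0
      _ = (1-x) ^ ((n : ℝ) - ((2:ℕ) : ℝ)) * f x := by ring
  -- denominator overall lower bound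
  have hJ2pos : 0 < Jb (2-α) ((n:ℝ)-1) := Jb_pos hu2 hv2
  have hch2 : (0:ℝ) < (n.choose 2 : ℝ) := by
    exact_mod_cast Nat.choose_pos hn2
  set D₀ : ℝ := C₁ * ((n.choose 2 : ℝ) * Jb (2-α) ((n:ℝ)-1)) with hD₀
  have hD₀pos : 0 < D₀ := by positivity
  have hDlow : D₀ ≤ lamTot n := by
    rw [hlamTot]
    have hmem : (2:ℕ) ∈ Finset.Icc 2 n := Finset.mem_Icc.mpr ⟨le_refl 2, hn2⟩
    have hterm : D₀ ≤ (n.choose 2 : ℝ) * lam n 2 := by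
      rw [hD₀]
      calc C₁ * ((n.choose 2 : ℝ) * Jb (2-α) ((n:ℝ)-1))
          = (n.choose 2 : ℝ) * (C₁ * Jb (2-α) ((n:ℝ)-1)) := by ring
        _ ≤ (n.choose 2 : ℝ) * lam n 2 := mul_le_mul_of_nonneg_left hlow (by positivity)
    refine le_trans hterm (Finset.single_le_sum (f := fun j => (n.choose j : ℝ) * lam n j) ?_ hmem)
    intro j hj
    have := hlam_nonneg j (Finset.mem_Icc.mp hj).1
    positivity
  -- numerator
  have hNnn : 0 ≤ (n.choose (k+1) : ℝ) * lam n (k+1) := by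
    have := hlam_nonneg (k+1) (by omega)
    positivity
  have htel := tele α hα2 n k hk hkn
  have hP0 : 0 ≤ ∏ j ∈ Finset.Icc 2 k, (((j:ℝ)-α)/((j:ℝ)+1)) := by
    apply Finset.prod_nonneg
    intro j hj
    have hj2 : (2:ℝ) ≤ (j:ℝ) := by exact_mod_cast (Finset.mem_Icc.mp hj).1
    apply div_nonneg <;> linarith
  have hNup : (n.choose (k+1) : ℝ) * lam n (k+1)
      ≤ C₂ * ((n.choose 2 : ℝ) * Jb (2-α) ((n:ℝ)-1) * ∏ j ∈ Finset.Icc 2 k, (((j:ℝ)-α)/((j:ℝ)+1))) := by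
    calc (n.choose (k+1) : ℝ) * lam n (k+1)
        ≤ (n.choose (k+1) : ℝ) * (C₂ * Jb ((k:ℝ)+1-α) ((n:ℝ)-(k:ℝ))) :=
          mul_le_mul_of_nonneg_left hup (by positivity)
      _ = C₂ * ((n.choose (k+1) : ℝ) * Jb ((k:ℝ)+1-α) ((n:ℝ)-(k:ℝ))) := by ring
      _ = C₂ * ((n.choose 2 : ℝ) * Jb (2-α) ((n:ℝ)-1) * ∏ j ∈ Finset.Icc 2 k, (((j:ℝ)-α)/((j:ℝ)+1))) := by
          rw [htel]
  -- conclude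
  rw [hζ]
  have hstep1 : (n.choose (k+1) : ℝ) * lam n (k+1) / lamTot n
      ≤ (n.choose (k+1) : ℝ) * lam n (k+1) / D₀ :=
    div_le_div_of_nonneg_left hNnn hD₀pos hDlow
  have hstep2 : (n.choose (k+1) : ℝ) * lam n (k+1) / D₀
      ≤ (C₂/C₁) * ∏ j ∈ Finset.Icc 2 k, (((j:ℝ)-α)/((j:ℝ)+1)) := by
    rw [div_le_iff₀ hD₀pos, hD₀]
    calc (n.choose (k+1) : ℝ) * lam n (k+1)
        ≤ C₂ * ((n.choose 2 : ℝ) * Jb (2-α) ((n:ℝ)-1) * ∏ j ∈ Finset.Icc 2 k, (((j:ℝ)-α)/((j:ℝ)+1))) := hNup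
      _ = (C₂/C₁) * (∏ j ∈ Finset.Icc 2 k, (((j:ℝ)-α)/((j:ℝ)+1))) * (C₁ * ((n.choose 2 : ℝ) * Jb (2-α) ((n:ℝ)-1))) := by
          field_simp
  have hstep3 : (C₂/C₁) * ∏ j ∈ Finset.Icc 2 k, (((j:ℝ)-α)/((j:ℝ)+1))
      ≤ (C₂/C₁) * (8 * ((k:ℝ)) ^ (-(1+α))) := by
    apply mul_le_mul_of_nonneg_left _ (by positivity)
    refine le_trans (prod_bound α hα1 hα2 k hk) ?_
    have : ((k:ℝ)+1) ^ (-(1+α)) ≤ ((k:ℝ)) ^ (-(1+α)) :=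
      Real.rpow_le_rpow_of_nonpos hkpos (by linarith) (by linarith)
    linarith
  calc (n.choose (k+1) : ℝ) * lam n (k+1) / lamTot n
      ≤ (C₂/C₁) * (8 * ((k:ℝ)) ^ (-(1+α))) := le_trans hstep1 (le_trans hstep2 hstep3)
    _ = 8 * C₂ / C₁ * (k:ℝ) ^ (-(1+α)) := by ring
end

section
/- Let 1 < α < 2. There exist constants 0 < c ≤ C < ∞ such that for all integers 2 ≤ k ≤ n, c n^α k^{−1−α} ≤ C(n,k) ∫₀¹ x^{k−2}(1−x)^{n−k} x^{1−α} dx ≤ C n^α k^{−1−α}. -/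
open MeasureTheory

private lemma wendel_upper {x s : ℝ} (hx : 0 < x) (hs0 : 0 ≤ s) (hs1 : s ≤ 1) :
    Real.Gamma (x + s) ≤ Real.Gamma x * x ^ s := by
  have hx1 : (0:ℝ) < x + 1 := by linarith
  have h := Real.convexOn_log_Gamma.2 (Set.mem_Ioi.2 hx) (Set.mem_Ioi.2 hx1)
    (by linarith : (0:ℝ) ≤ 1 - s) hs0 (by ring)
  simp only [smul_eq_mul, Function.comp] at h
  have hpt : (1 - s) * x + s * (x + 1) = x + s := by ring
  rw [hpt] at h
  have hG : Real.Gamma (x + 1) = x * Real.Gamma x := Real.Gamma_add_one hx.ne'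
  have hGx : 0 < Real.Gamma x := Real.Gamma_pos_of_pos hx
  have hGxs : 0 < Real.Gamma (x + s) := Real.Gamma_pos_of_pos (by linarith)
  rw [hG, Real.log_mul hx.ne' hGx.ne'] at h
  have h2 : Real.log (Real.Gamma (x + s)) ≤ Real.log (Real.Gamma x) + s * Real.log x := by
    nlinarith [h]
  calc Real.Gamma (x + s) = Real.exp (Real.log (Real.Gamma (x + s))) := (Real.exp_log hGxs).symm
    _ ≤ Real.exp (Real.log (Real.Gamma x) + s * Real.log x) := Real.exp_le_exp.2 h2
    _ = Real.Gamma x * x ^ s := by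
        rw [Real.exp_add, Real.exp_log hGx, Real.rpow_def_of_pos hx, mul_comm s]

private lemma wendel_lower {x s : ℝ} (hx : 0 < x) (hs0 : 0 ≤ s) (hs1 : s ≤ 1) :
    x * Real.Gamma x ≤ Real.Gamma (x + s) * (x + s) ^ (1 - s) := by
  have hxs : (0:ℝ) < x + s := by linarith
  have hxs1 : (0:ℝ) < x + s + 1 := by linarith
  have h := Real.convexOn_log_Gamma.2 (Set.mem_Ioi.2 hxs) (Set.mem_Ioi.2 hxs1)
    hs0 (by linarith : (0:ℝ) ≤ 1 - s) (by ring)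
  simp only [smul_eq_mul, Function.comp] at h
  have hpt : s * (x + s) + (1 - s) * (x + s + 1) = x + 1 := by ring
  rw [hpt] at h
  have hG1 : Real.Gamma (x + 1) = x * Real.Gamma x := Real.Gamma_add_one hx.ne'
  have hG2 : Real.Gamma (x + s + 1) = (x + s) * Real.Gamma (x + s) :=
    Real.Gamma_add_one hxs.ne'
  have hGx : 0 < Real.Gamma x := Real.Gamma_pos_of_pos hx
  have hGxs : 0 < Real.Gamma (x + s) := Real.Gamma_pos_of_pos hxs
  rw [hG1, hG2, Real.log_mul hx.ne' hGx.ne', Real.log_mul hxs.ne' hGxs.ne'] at h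
  have h2 : Real.log (x * Real.Gamma x) ≤
      Real.log (Real.Gamma (x + s)) + (1 - s) * Real.log (x + s) := by
    rw [Real.log_mul hx.ne' hGx.ne']; nlinarith [h]
  calc x * Real.Gamma x = Real.exp (Real.log (x * Real.Gamma x)) :=
        (Real.exp_log (by positivity)).symm
    _ ≤ Real.exp (Real.log (Real.Gamma (x + s)) + (1 - s) * Real.log (x + s)) :=
        Real.exp_le_exp.2 h2
    _ = Real.Gamma (x + s) * (x + s) ^ (1 - s) := by
        rw [Real.exp_add, Real.exp_log hGxs, Real.rpow_def_of_pos hxs, mul_comm (1-s)]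

private lemma real_beta {a b : ℝ} (ha : 0 < a) (hb : 0 < b) :
    ∫ x in (0:ℝ)..1, x ^ (a - 1) * (1 - x) ^ (b - 1) =
      Real.Gamma a * Real.Gamma b / Real.Gamma (a + b) := by
  have hc := Complex.Gamma_mul_Gamma_eq_betaIntegral
    (s := (a:ℂ)) (t := (b:ℂ)) (by simpa using ha) (by simpa using hb)
  have hbeta : Complex.betaIntegral a b
      = ((∫ x in (0:ℝ)..1, x ^ (a - 1) * (1 - x) ^ (b - 1) : ℝ) : ℂ) := by
    rw [Complex.betaIntegral, ← intervalIntegral.integral_ofReal]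
    apply intervalIntegral.integral_congr
    intro x hx
    rw [Set.uIcc_of_le zero_le_one] at hx
    push_cast
    rw [Complex.ofReal_cpow hx.1, Complex.ofReal_cpow (by linarith [hx.2])]
    push_cast
    ring
  rw [hbeta] at hc
  rw [show ((a:ℂ) + b) = ((a + b : ℝ) : ℂ) by push_cast; ring] at hc
  rw [Complex.Gamma_ofReal, Complex.Gamma_ofReal, Complex.Gamma_ofReal,
    ← Complex.ofReal_mul, ← Complex.ofReal_mul] at hc
  have h := Complex.ofReal_inj.1 hc
  have hG : Real.Gamma (a + b) ≠ 0 := (Real.Gamma_pos_of_pos (by linarith)).ne'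
  field_simp
  linarith [h]

private lemma rpow_split {t : ℝ} (ht : 0 < t) (p q : ℝ) : t ^ (p + q) = t ^ p * t ^ q :=
  Real.rpow_add ht p q

/-- bounds for `n! / Γ(n+1-α)` with `n = m+2`. -/
private lemma Nbounds (α : ℝ) (hα1 : 1 < α) (hα2 : α < 2) (m : ℕ) :
    (2:ℝ)^(1-α) * ((m:ℝ)+2)^α * Real.Gamma ((m:ℝ)+3-α) ≤ ((m+2).factorial : ℝ) ∧
    ((m+2).factorial : ℝ) ≤ ((m:ℝ)+2)^α * Real.Gamma ((m:ℝ)+3-α) := by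
  set u : ℝ := (m:ℝ) + 2 with hu_def
  set v : ℝ := (m:ℝ) + 1 with hv_def
  have hv : (0:ℝ) < v := by positivity
  have hu : (0:ℝ) < u := by positivity
  have hGv : Real.Gamma v = (m.factorial : ℝ) := by
    rw [hv_def]; exact_mod_cast Real.Gamma_nat_eq_factorial m
  have hfac : ((m+2).factorial : ℝ) = u * v * (m.factorial : ℝ) := by
    rw [hu_def, hv_def]; push_cast [Nat.factorial_succ]; ring
  have hGpos : (0:ℝ) < Real.Gamma ((m:ℝ)+3-α) := Real.Gamma_pos_of_pos (by linarith)
  have hWu : Real.Gamma ((m:ℝ)+3-α) ≤ Real.Gamma v * v ^ (2-α) := by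
    have := wendel_upper (x := v) (s := 2-α) hv (by linarith) (by linarith)
    have he : v + (2-α) = (m:ℝ)+3-α := by rw [hv_def]; ring
    rwa [he] at this
  have hWl : v * Real.Gamma v ≤ Real.Gamma ((m:ℝ)+3-α) * ((m:ℝ)+3-α) ^ (α-1) := by
    have := wendel_lower (x := v) (s := 2-α) hv (by linarith) (by linarith)
    have he : v + (2-α) = (m:ℝ)+3-α := by rw [hv_def]; ring
    have he2 : 1 - (2-α) = α - 1 := by ring
    rwa [he, he2] at this
  constructor
  · -- lower bound
    have key : (2:ℝ)^(1-α) * u^(α-1) * v^(1-α) ≤ 1 := by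
      have h1 : (2:ℝ)^(1-α) = ((2:ℝ)^(α-1))⁻¹ := by
        rw [show (1-α) = -(α-1) by ring, Real.rpow_neg (by norm_num)]
      have h2 : v^(1-α) = (v^(α-1))⁻¹ := by
        rw [show (1-α) = -(α-1) by ring, Real.rpow_neg hv.le]
      have h3 : (2:ℝ)^(α-1) * v^(α-1) = (2*v)^(α-1) :=
        (Real.mul_rpow (by norm_num) hv.le).symm
      have h4 : u^(α-1) ≤ (2*v)^(α-1) :=
        Real.rpow_le_rpow hu.le (by rw [hu_def, hv_def]; linarith [Nat.cast_nonneg (α := ℝ) m])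
          (by linarith)
      rw [h1, h2]
      have hpos : (0:ℝ) < (2*v)^(α-1) := by positivity
      calc ((2:ℝ)^(α-1))⁻¹ * u^(α-1) * (v^(α-1))⁻¹
          = u^(α-1) / ((2:ℝ)^(α-1) * v^(α-1)) := by ring
        _ = u^(α-1) / (2*v)^(α-1) := by rw [h3]
        _ ≤ 1 := (div_le_one hpos).2 h4
    have huα : u ^ α = u ^ (α-1) * u := by
      rw [← Real.rpow_add_one hu.ne' (α-1)]; congr 1; ring
    have hvα : v ^ (2-α) = v ^ (1-α) * v := by
      rw [← Real.rpow_add_one hv.ne' (1-α)]; congr 1; ring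
    calc (2:ℝ)^(1-α) * u^α * Real.Gamma ((m:ℝ)+3-α)
        ≤ (2:ℝ)^(1-α) * u^α * (Real.Gamma v * v ^ (2-α)) := by
          apply mul_le_mul_of_nonneg_left hWu (by positivity)
      _ = ((2:ℝ)^(1-α) * u^(α-1) * v^(1-α)) * (u * v * Real.Gamma v) := by
          rw [huα, hvα]; ring
      _ ≤ 1 * (u * v * Real.Gamma v) := by
          apply mul_le_mul_of_nonneg_right key
          have := Real.Gamma_pos_of_pos hv
          positivity
      _ = ((m+2).factorial : ℝ) := by rw [one_mul, hGv, hfac]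
  · -- upper bound
    have h4 : ((m:ℝ)+3-α) ^ (α-1) ≤ u ^ (α-1) :=
      Real.rpow_le_rpow (by linarith) (by rw [hu_def]; linarith) (by linarith)
    have huα : u ^ α = u ^ (α-1) * u := by
      rw [← Real.rpow_add_one hu.ne' (α-1)]; congr 1; ring
    calc ((m+2).factorial : ℝ) = u * (v * Real.Gamma v) := by rw [hfac, hGv]; ring
      _ ≤ u * (Real.Gamma ((m:ℝ)+3-α) * ((m:ℝ)+3-α) ^ (α-1)) := by
          apply mul_le_mul_of_nonneg_left hWl hu.le
      _ ≤ u * (Real.Gamma ((m:ℝ)+3-α) * u ^ (α-1)) := by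
          apply mul_le_mul_of_nonneg_left (mul_le_mul_of_nonneg_left h4 hGpos.le) hu.le
      _ = u ^ α * Real.Gamma ((m:ℝ)+3-α) := by rw [huα]; ring

/-- bounds for `Γ(k-α) / k!` with `k = j+2`. -/
private lemma Kbounds (α : ℝ) (hα1 : 1 < α) (hα2 : α < 2) (j : ℕ) :
    (2:ℝ)^(1-α) * ((j:ℝ)+2)^(-(1+α)) * ((j+2).factorial : ℝ) ≤ Real.Gamma ((j:ℝ)+2-α) ∧
    Real.Gamma ((j:ℝ)+2-α) ≤ (4/(2-α)^2) * ((j:ℝ)+2)^(-(1+α)) * ((j+2).factorial : ℝ) := by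
  set t : ℝ := (j:ℝ) + 2 with ht_def
  have ht : (0:ℝ) < t := by positivity
  have ht2 : (2:ℝ) ≤ t := by rw [ht_def]; linarith [Nat.cast_nonneg (α := ℝ) j]
  have htα : (0:ℝ) < t - α := by linarith
  have hKpos : (0:ℝ) < Real.Gamma (t - α) := Real.Gamma_pos_of_pos htα
  have hGt : Real.Gamma t = ((j+1).factorial : ℝ) := by
    rw [ht_def, show (j:ℝ)+2 = ((j+1:ℕ):ℝ)+1 by push_cast; ring]
    exact_mod_cast Real.Gamma_nat_eq_factorial (j+1)
  have hfac : ((j+2).factorial : ℝ) = t * ((j+1).factorial : ℝ) := by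
    rw [ht_def]; push_cast [Nat.factorial_succ]; ring
  have hrec : Real.Gamma (t + (2-α)) = (t+1-α) * ((t-α) * Real.Gamma (t-α)) := by
    have e1 : Real.Gamma (t - α + 1) = (t-α) * Real.Gamma (t-α) := Real.Gamma_add_one htα.ne'
    have e2 : Real.Gamma ((t - α + 1) + 1) = (t-α+1) * Real.Gamma (t-α+1) :=
      Real.Gamma_add_one (by linarith)
    rw [show t + (2-α) = (t - α + 1) + 1 by ring, e2, e1]; ring
  have hDpos : (0:ℝ) < (t+1-α) * (t-α) := by
    apply mul_pos (by linarith) htα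
  have hptn : (0:ℝ) ≤ t^(-(1+α)) := Real.rpow_nonneg ht.le _
  have hpta : (0:ℝ) ≤ t^(α-1) := Real.rpow_nonneg ht.le _
  have hp2n : (0:ℝ) ≤ (2:ℝ)^(1-α) := Real.rpow_nonneg (by norm_num) _
  constructor
  · -- lower bound for Gamma(t-α)
    have hWl : t * Real.Gamma t ≤
        Real.Gamma (t + (2-α)) * (t + (2-α)) ^ (α-1) := by
      have := wendel_lower (x := t) (s := 2-α) ht (by linarith) (by linarith)
      rwa [show 1 - (2-α) = α - 1 by ring] at this
    have hfact : t * Real.Gamma t = ((j+2).factorial : ℝ) := by rw [hGt, hfac]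
    have key : (2:ℝ)^(1-α) * t^(-(1+α)) * ((t+1-α) * (t-α) * (t + (2-α)) ^ (α-1)) ≤ 1 := by
      have h1 : (t + (2-α)) ^ (α-1) ≤ (2*t) ^ (α-1) :=
        Real.rpow_le_rpow (by linarith) (by linarith) (by linarith)
      have h2 : ((2:ℝ)*t) ^ (α-1) = (2:ℝ)^(α-1) * t^(α-1) :=
        Real.mul_rpow (by norm_num) ht.le
      have h3 : (t+1-α) * (t-α) ≤ t * t := by
        nlinarith only [mul_nonneg (show (0:ℝ) ≤ t-2 by linarith)
            (show (0:ℝ) ≤ 2*α-1 by linarith),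
          mul_nonneg (show (0:ℝ) ≤ α-1 by linarith) (show (0:ℝ) ≤ 4-α by linarith)]
      have h4 : (2:ℝ)^(1-α) * (2:ℝ)^(α-1) = 1 := by
        rw [← rpow_split (by norm_num : (0:ℝ) < 2)]; norm_num
      have h5 : t^(-(1+α)) * (t * t) * t^(α-1) = 1 := by
        have e : t^(-(1+α)) * (t * t) * t^(α-1) = t ^ ((-(1+α)) + 1 + 1 + (α-1)) := by
          rw [rpow_split ht ((-(1+α)) + 1 + 1) (α-1), rpow_split ht ((-(1+α)) + 1) 1,
            rpow_split ht (-(1+α)) 1, Real.rpow_one]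
          ring
        rw [e, show (-(1+α)) + 1 + 1 + (α-1) = 0 by ring, Real.rpow_zero]
      calc (2:ℝ)^(1-α) * t^(-(1+α)) * ((t+1-α) * (t-α) * (t + (2-α)) ^ (α-1))
          ≤ (2:ℝ)^(1-α) * t^(-(1+α)) * ((t * t) * ((2*t) ^ (α-1))) := by
            apply mul_le_mul_of_nonneg_left _ (mul_nonneg hp2n hptn)
            apply mul_le_mul h3 h1 (Real.rpow_nonneg (by linarith) _) (by nlinarith)
        _ = ((2:ℝ)^(1-α) * (2:ℝ)^(α-1)) * (t^(-(1+α)) * (t * t) * t^(α-1)) := by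
            rw [h2]; ring
        _ = 1 := by rw [h4, h5, one_mul]
    calc (2:ℝ)^(1-α) * t^(-(1+α)) * ((j+2).factorial : ℝ)
        = (2:ℝ)^(1-α) * t^(-(1+α)) * (t * Real.Gamma t) := by rw [hfact]
      _ ≤ (2:ℝ)^(1-α) * t^(-(1+α)) *
            (Real.Gamma (t + (2-α)) * (t + (2-α)) ^ (α-1)) := by
          apply mul_le_mul_of_nonneg_left hWl (mul_nonneg hp2n hptn)
      _ = ((2:ℝ)^(1-α) * t^(-(1+α)) * ((t+1-α) * (t-α) * (t + (2-α)) ^ (α-1))) *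
            Real.Gamma (t-α) := by rw [hrec]; ring
      _ ≤ 1 * Real.Gamma (t-α) := mul_le_mul_of_nonneg_right key hKpos.le
      _ = Real.Gamma (t-α) := one_mul _
  · -- upper bound
    have hWu : Real.Gamma (t + (2-α)) ≤ Real.Gamma t * t ^ (2-α) :=
      wendel_upper ht (by linarith) (by linarith)
    rw [hrec] at hWu
    -- hWu : (t+1-α) * ((t-α) * Γ(t-α)) ≤ (j+1)! * t^(2-α)
    have key : ((t+1-α) * (t-α)) * ((4/(2-α)^2) * t^(-(1+α)) * ((j+2).factorial : ℝ))
        ≥ ((j+1).factorial : ℝ) * t ^ (2-α) := by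
      have e1 : t ^ (2-α) = (t*t) * t^(-(1+α)) * t := by
        have e : (t*t) * t^(-(1+α)) * t = t ^ ((1:ℝ) + 1 + (-(1+α)) + 1) := by
          rw [rpow_split ht ((1:ℝ) + 1 + (-(1+α))) 1, rpow_split ht ((1:ℝ) + 1) (-(1+α)),
            rpow_split ht 1 1, Real.rpow_one]
        rw [e, show (1:ℝ) + 1 + (-(1+α)) + 1 = 2 - α by ring]
      have hprod : (0:ℝ) ≤ α * (t - 2) :=
        mul_nonneg (by linarith) (by linarith)
      have h3 : (2-α) * t ≤ 2 * (t - α) := by nlinarith only [hprod]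
      have h4 : (2-α) * t ≤ 2 * (t + 1 - α) := by nlinarith only [hprod]
      have h5 : t * t ≤ (4/(2-α)^2) * ((t+1-α) * (t-α)) := by
        have h6 : ((2-α) * t) * ((2-α) * t) ≤ (2 * (t+1-α)) * (2 * (t - α)) :=
          mul_le_mul h4 h3 (mul_nonneg (by linarith) ht.le) (by linarith)
        have h7 : (0:ℝ) < (2-α)^2 := pow_pos (by linarith) 2
        rw [div_mul_eq_mul_div, le_div_iff₀ h7]
        nlinarith only [h6]
      rw [hfac, e1]
      have hnn : (0:ℝ) ≤ t^(-(1+α)) * t * ((j+1).factorial : ℝ) := by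
        apply mul_nonneg (mul_nonneg hptn ht.le) (Nat.cast_nonneg _)
      calc ((j+1).factorial : ℝ) * ((t*t) * t^(-(1+α)) * t)
          = (t*t) * (t^(-(1+α)) * t * ((j+1).factorial : ℝ)) := by ring
        _ ≤ ((4/(2-α)^2) * ((t+1-α) * (t-α))) *
              (t^(-(1+α)) * t * ((j+1).factorial : ℝ)) :=
            mul_le_mul_of_nonneg_right h5 hnn
        _ = ((t+1-α) * (t-α)) * ((4/(2-α)^2) * t^(-(1+α)) * (t * ((j+1).factorial : ℝ))) := by
            ring
    have hstep : ((t+1-α) * (t-α)) * Real.Gamma (t-α) ≤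
        ((t+1-α) * (t-α)) * ((4/(2-α)^2) * t^(-(1+α)) * ((j+2).factorial : ℝ)) := by
      calc ((t+1-α) * (t-α)) * Real.Gamma (t-α)
          = (t+1-α) * ((t-α) * Real.Gamma (t-α)) := by ring
        _ ≤ ((j+1).factorial : ℝ) * t ^ (2-α) := by rw [← hGt]; exact hWu
        _ ≤ _ := key
    exact le_of_mul_le_mul_left hstep hDpos

/-- For `1 < α < 2`, there exist constants `0 < c ≤ C < ∞` such that for all `2 ≤ k ≤ n`,
`c n^α k^(-1-α) ≤ C(n,k) ∫₀¹ x^(k-2) (1-x)^(n-k) x^(1-α) dx ≤ C n^α k^(-1-α)`. -/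
theorem stmt11 (α : ℝ) (hα1 : 1 < α) (hα2 : α < 2) :
    ∃ c C : ℝ, 0 < c ∧ c ≤ C ∧ ∀ n k : ℕ, 2 ≤ k → k ≤ n →
      c * (n : ℝ) ^ α * (k : ℝ) ^ (-(1 + α)) ≤
        (n.choose k : ℝ) *
          ∫ x in (0:ℝ)..1, x ^ ((k : ℝ) - 2) * (1 - x) ^ ((n : ℝ) - (k : ℝ)) * x ^ (1 - α) ∧
      (n.choose k : ℝ) *
          ∫ x in (0:ℝ)..1, x ^ ((k : ℝ) - 2) * (1 - x) ^ ((n : ℝ) - (k : ℝ)) * x ^ (1 - α) ≤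
        C * (n : ℝ) ^ α * (k : ℝ) ^ (-(1 + α)) := by
  refine ⟨(2:ℝ)^(1-α) * (2:ℝ)^(1-α), 4/(2-α)^2, by positivity, ?_, ?_⟩
  · have h1 : (2:ℝ)^(1-α) ≤ 1 :=
      Real.rpow_le_one_of_one_le_of_nonpos (by norm_num) (by linarith)
    have h2 : (0:ℝ) < (2:ℝ)^(1-α) := by positivity
    have h3 : (2-α)^2 ≤ 1 := by nlinarith
    have h4 : (1:ℝ) ≤ 4/(2-α)^2 := by
      rw [le_div_iff₀ (pow_pos (by linarith : (0:ℝ) < 2-α) 2)]; linarith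
    nlinarith
  intro n k hk2 hkn
  obtain ⟨j, rfl⟩ : ∃ j, k = j + 2 := ⟨k - 2, by omega⟩
  obtain ⟨m, rfl⟩ : ∃ m, n = m + 2 := ⟨n - 2, by omega⟩
  have hjm : j ≤ m := by omega
  have hjmr : (j:ℝ) ≤ (m:ℝ) := by exact_mod_cast hjm
  set a : ℝ := (j:ℝ) + 2 - α with ha_def
  set b : ℝ := (m:ℝ) - (j:ℝ) + 1 with hb_def
  have ha : (0:ℝ) < a := by rw [ha_def]; have : (0:ℝ) ≤ (j:ℝ) := Nat.cast_nonneg j; linarith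
  have hb : (0:ℝ) < b := by rw [hb_def]; linarith
  have hKpos : (0:ℝ) < Real.Gamma a := Real.Gamma_pos_of_pos ha
  have hGpos : (0:ℝ) < Real.Gamma ((m:ℝ)+3-α) := Real.Gamma_pos_of_pos (by
    have : (0:ℝ) ≤ (m:ℝ) := Nat.cast_nonneg m; linarith)
  -- rewrite the integral as a Beta value
  have hInt : (∫ x in (0:ℝ)..1, x ^ (((j+2:ℕ):ℝ) - 2) * (1 - x) ^ (((m+2:ℕ):ℝ) - ((j+2:ℕ):ℝ))
        * x ^ (1 - α)) =
      Real.Gamma a * ((m-j).factorial : ℝ) / Real.Gamma ((m:ℝ)+3-α) := by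
    have hcongr : (∫ x in (0:ℝ)..1, x ^ (((j+2:ℕ):ℝ) - 2) * (1 - x) ^ (((m+2:ℕ):ℝ) - ((j+2:ℕ):ℝ))
          * x ^ (1 - α)) = ∫ x in (0:ℝ)..1, x ^ (a - 1) * (1 - x) ^ (b - 1) := by
      apply intervalIntegral.integral_congr
      intro x hx
      dsimp only
      rw [Set.uIcc_of_le zero_le_one] at hx
      have he1 : ((m+2:ℕ):ℝ) - ((j+2:ℕ):ℝ) = b - 1 := by rw [hb_def]; push_cast; ring
      rcases eq_or_lt_of_le hx.1 with h0 | h0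
      · -- x = 0
        have hne1 : (1:ℝ) - α ≠ 0 := by linarith
        have hne2 : a - 1 ≠ 0 := by
          rw [ha_def]
          rcases Nat.eq_zero_or_pos j with hj | hj
          · simp [hj]; intro h; linarith
          · have : (1:ℝ) ≤ (j:ℝ) := by exact_mod_cast hj
            intro h; linarith
        rw [← h0]
        rw [Real.zero_rpow hne1, Real.zero_rpow hne2, mul_zero, zero_mul]
      · rw [he1, mul_right_comm, ← Real.rpow_add h0]
        congr 2
        rw [ha_def]; push_cast; ring
    rw [hcongr, real_beta ha hb]
    have hb' : Real.Gamma b = ((m-j).factorial : ℝ) := by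
      rw [hb_def, show (m:ℝ) - (j:ℝ) + 1 = ((m-j:ℕ):ℝ) + 1 by rw [Nat.cast_sub hjm]]
      exact_mod_cast Real.Gamma_nat_eq_factorial (m - j)
    have hab : a + b = (m:ℝ) + 3 - α := by rw [ha_def, hb_def]; ring
    rw [hb', hab]
  rw [hInt]
  -- choose identity
  have hch : ((m+2).choose (j+2) : ℝ) * (((j+2).factorial : ℝ) * ((m-j).factorial : ℝ))
      = ((m+2).factorial : ℝ) := by
    have h := Nat.choose_mul_factorial_mul_factorial (show j+2 ≤ m+2 by omega)
    rw [show m + 2 - (j + 2) = m - j by omega] at h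
    rw [← mul_assoc]
    exact_mod_cast h
  have hfjpos : (0:ℝ) < ((j+2).factorial : ℝ) := by exact_mod_cast Nat.factorial_pos (j+2)
  have hfmpos : (0:ℝ) < ((m-j).factorial : ℝ) := by exact_mod_cast Nat.factorial_pos (m-j)
  have hform : ((m+2).choose (j+2) : ℝ) *
      (Real.Gamma a * ((m-j).factorial : ℝ) / Real.Gamma ((m:ℝ)+3-α))
      = ((m+2).factorial : ℝ) * Real.Gamma a / (((j+2).factorial : ℝ) * Real.Gamma ((m:ℝ)+3-α)) := by
    field_simp
    linear_combination hch
  rw [hform]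
  have hcastn : ((m+2:ℕ):ℝ) = (m:ℝ) + 2 := by push_cast; ring
  have hcastk : ((j+2:ℕ):ℝ) = (j:ℝ) + 2 := by push_cast; ring
  rw [hcastn, hcastk]
  have hN := Nbounds α hα1 hα2 m
  have hK := Kbounds α hα1 hα2 j
  have hKa : Real.Gamma ((j:ℝ)+2-α) = Real.Gamma a := by rw [ha_def]
  rw [hKa] at hK
  have hdenpos : (0:ℝ) < ((j+2).factorial : ℝ) * Real.Gamma ((m:ℝ)+3-α) :=
    mul_pos hfjpos hGpos
  constructor
  · rw [le_div_iff₀ hdenpos]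
    have := mul_le_mul hN.1 hK.1
      (mul_nonneg (mul_nonneg (Real.rpow_nonneg (by norm_num) _)
        (Real.rpow_nonneg (by positivity) _)) (Nat.cast_nonneg _))
      (Nat.cast_nonneg _)
    calc (2:ℝ)^(1-α) * (2:ℝ)^(1-α) * ((m:ℝ)+2)^α * ((j:ℝ)+2)^(-(1+α)) *
          (((j+2).factorial : ℝ) * Real.Gamma ((m:ℝ)+3-α))
        = ((2:ℝ)^(1-α) * ((m:ℝ)+2)^α * Real.Gamma ((m:ℝ)+3-α)) *
          ((2:ℝ)^(1-α) * ((j:ℝ)+2)^(-(1+α)) * ((j+2).factorial : ℝ)) := by ring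
      _ ≤ ((m+2).factorial : ℝ) * Real.Gamma a := this
  · rw [div_le_iff₀ hdenpos]
    have := mul_le_mul hN.2 hK.2 hKpos.le
      (mul_nonneg (Real.rpow_nonneg (by positivity) _) hGpos.le)
    calc ((m+2).factorial : ℝ) * Real.Gamma a
        ≤ (((m:ℝ)+2)^α * Real.Gamma ((m:ℝ)+3-α)) *
          ((4/(2-α)^2) * ((j:ℝ)+2)^(-(1+α)) * ((j+2).factorial : ℝ)) := this
      _ = 4/(2-α)^2 * ((m:ℝ)+2)^α * ((j:ℝ)+2)^(-(1+α)) *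
          (((j+2).factorial : ℝ) * Real.Gamma ((m:ℝ)+3-α)) := by ring
end

section
/- Let 1 < α < 2 and let F(x) = μ((0,x]) where μ is the probability measure with Laplace transform 1 − (1 + λ^{1−α})^{−1/(α−1)}. Then F is continuous on [0,∞), i.e. μ has no atoms. -/
open MeasureTheory Complex Filter Set Metric Real intervalIntegral

-- re of z ^ (-β) positive
lemma aux_re_cpow_pos {β : ℝ} (hβ0 : 0 < β) (hβ1 : β < 1) {z : ℂ} (hz : 0 < z.re) :
    0 < (z ^ (-(β:ℂ))).re := by
  have hz0 : z ≠ 0 := by intro h; rw [h] at hz; simp at hz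
  rw [Complex.cpow_def_of_ne_zero hz0, Complex.exp_re]
  have harg : |Complex.arg z| < π / 2 := Complex.abs_arg_lt_pi_div_two_iff.2 (Or.inl hz)
  have him : (Complex.log z * (-(β:ℂ))).im = Complex.arg z * (-β) := by
    simp [Complex.mul_im, Complex.log_im]
  rw [him]
  have hcos : 0 < Real.cos (Complex.arg z * (-β)) := by
    apply Real.cos_pos_of_mem_Ioo
    constructor
    · nlinarith [abs_lt.1 harg, abs_nonneg (Complex.arg z), neg_abs_le (Complex.arg z),
        le_abs_self (Complex.arg z), Real.pi_pos]
    · nlinarith [abs_lt.1 harg, neg_abs_le (Complex.arg z), le_abs_self (Complex.arg z),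
        Real.pi_pos]
  positivity

lemma aux_norm_log_le {w : ℂ} (hw : 0 < w.re) : ‖Complex.log (1 + w)‖ ≤ 3 * ‖w‖ := by
  set u : ℂ := 1 + w with hu
  have hure : 1 ≤ u.re := by simp only [hu, Complex.add_re, Complex.one_re]; linarith
  have habs1 : 1 ≤ ‖u‖ := le_trans hure (Complex.re_le_norm u)
  have habs0 : 0 < ‖u‖ := by linarith
  have habs_le : ‖u‖ ≤ 1 + ‖w‖ := by
    simpa [hu] using (norm_add_le 1 w)
  have hre : |(Complex.log u).re| ≤ ‖w‖ := by
    rw [Complex.log_re, _root_.abs_of_nonneg (Real.log_nonneg habs1)]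
    calc Real.log ‖u‖ ≤ ‖u‖ - 1 :=
          Real.log_le_sub_one_of_pos (by linarith)
      _ ≤ ‖w‖ := by linarith
  -- imaginary part = arg u = arcsin (im/abs)
  have hr : |u.im / ‖u‖| ≤ 1 := by
    rw [abs_div, abs_of_pos habs0, div_le_one habs0]
    exact Complex.abs_im_le_norm u
  have him : |(Complex.log u).im| ≤ 2 * ‖w‖ := by
    rw [Complex.log_im, Complex.arg_of_re_nonneg (by linarith)]
    set r := u.im / ‖u‖ with hrdef
    have h1 : |Real.arcsin r| = Real.arcsin |r| := by
      rcases abs_choice r with h | h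
      · rw [h, _root_.abs_of_nonneg (Real.arcsin_nonneg.2 (h ▸ abs_nonneg r))]
      · have hr0 : r ≤ 0 := by nlinarith [abs_nonneg r]
        rw [h, Real.arcsin_neg, _root_.abs_of_nonpos (by simpa using Real.arcsin_nonneg.2 (neg_nonneg.2 hr0) : Real.arcsin r ≤ 0)]
    rw [h1]
    set a := Real.arcsin |r| with ha
    have ha0 : 0 ≤ a := Real.arcsin_nonneg.2 (abs_nonneg r)
    have ha2 : a ≤ π / 2 := Real.arcsin_le_pi_div_two _
    have hsin : Real.sin a = |r| := Real.sin_arcsin (by linarith [abs_nonneg r]) hr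
    have hjordan : 2 / π * a ≤ Real.sin a := Real.mul_le_sin ha0 ha2
    have hπ : (0:ℝ) < π := Real.pi_pos
    have hπ4 : π ≤ 4 := by linarith [Real.pi_le_four]
    have hrw : |r| ≤ ‖w‖ := by
      have h2 : |u.im| ≤ ‖w‖ := by
        have : u.im = w.im := by simp [hu]
        rw [this]
        exact Complex.abs_im_le_norm w
      calc |r| = |u.im| / ‖u‖ := by rw [hrdef, abs_div, abs_of_pos habs0]
        _ ≤ |u.im| := by
            rw [div_le_iff₀ habs0]; nlinarith [abs_nonneg u.im]
        _ ≤ ‖w‖ := h2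
    have : a ≤ π / 2 * |r| := by
      rw [hsin] at hjordan
      rw [div_mul_eq_mul_div, div_le_iff₀ hπ] at hjordan
      nlinarith
    nlinarith [abs_nonneg r]
  calc ‖Complex.log u‖ ≤ |(Complex.log u).re| + |(Complex.log u).im| :=
        Complex.norm_le_abs_re_add_abs_im _
    _ ≤ 3 * ‖w‖ := by linarith

lemma aux_key_small {c : ℝ} (hc : 0 < c) {w : ℂ} (hw : 0 < w.re)
    (hsmall : 3 * c * ‖w‖ ≤ 1) :
    ‖1 - (1 + w) ^ (-(c:ℂ))‖ ≤ 6 * c * ‖w‖ := by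
  have hu0 : (1 + w) ≠ 0 := by
    intro h
    have : (1 + w).re = 0 := by rw [h]; simp
    simp only [Complex.add_re, Complex.one_re] at this
    linarith
  rw [Complex.cpow_def_of_ne_zero hu0]
  set ζ : ℂ := Complex.log (1 + w) * (-(c:ℂ)) with hζ
  have hζn : ‖ζ‖ ≤ 3 * c * ‖w‖ := by
    rw [hζ, norm_mul]
    have h1 : ‖(-(c:ℂ))‖ = c := by
      simp [_root_.abs_of_pos hc]
    rw [h1]
    have := aux_norm_log_le hw
    nlinarith
  have h2 : ‖Complex.exp ζ - 1‖ ≤ 2 * ‖ζ‖ := by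
    have := Complex.norm_exp_sub_one_le (x := ζ) (by linarith)
    exact this
  calc ‖1 - Complex.exp ζ‖ = ‖Complex.exp ζ - 1‖ := by rw [norm_sub_rev]
    _ ≤ 2 * ‖ζ‖ := h2
    _ ≤ 6 * c * ‖w‖ := by linarith

lemma aux_key_crude {c : ℝ} (hc : 0 < c) {w : ℂ} (hw : 0 ≤ w.re) :
    ‖1 - (1 + w) ^ (-(c:ℂ))‖ ≤ 2 := by
  have habs1 : 1 ≤ ‖1 + w‖ := by
    have : 1 ≤ (1 + w).re := by simp only [Complex.add_re, Complex.one_re]; linarith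
    exact le_trans this (Complex.re_le_norm _)
  have h1 : ‖(1 + w) ^ (-(c:ℂ))‖ ≤ 1 := by
    have hcast : (-(c:ℂ)) = ((-c : ℝ) : ℂ) := by push_cast; ring
    rw [hcast, Complex.norm_cpow_real]
    exact Real.rpow_le_one_of_one_le_of_nonpos habs1 (by linarith)
  calc ‖1 - (1 + w) ^ (-(c:ℂ))‖ ≤ ‖(1:ℂ)‖ + ‖(1 + w) ^ (-(c:ℂ))‖ := norm_sub_le _ _
    _ ≤ 2 := by rw [norm_one]; linarith

lemma aux_f_diff {β c : ℝ} (hβ0 : 0 < β) (hβ1 : β < 1) :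
    DifferentiableOn ℂ (fun z : ℂ => 1 - (1 + z ^ (-(β:ℂ))) ^ (-(c:ℂ))) {z : ℂ | 0 < z.re} := by
  intro z hz
  apply DifferentiableAt.differentiableWithinAt
  have hz' : 0 < z.re := hz
  have h1 : DifferentiableAt ℂ (fun z : ℂ => z ^ (-(β:ℂ))) z := by
    apply DifferentiableAt.cpow differentiableAt_id (differentiableAt_const _)
    exact Or.inl hz'
  have h2 : DifferentiableAt ℂ (fun z : ℂ => (1 + z ^ (-(β:ℂ))) ^ (-(c:ℂ))) z := by
    apply DifferentiableAt.cpow ((differentiableAt_const _).add h1) (differentiableAt_const _)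
    exact Or.inl (by
      show 0 < (1 + z ^ (-(β:ℂ))).re
      simp only [Complex.add_re, Complex.one_re]
      linarith [aux_re_cpow_pos hβ0 hβ1 hz'])
  exact (differentiableAt_const _).sub h2

lemma aux_norm_cpow_neg_real {z : ℂ} (hz : z ≠ 0) (β : ℝ) :
    ‖z ^ (-(β:ℂ))‖ = ‖z‖ ^ (-β) := by
  have hcast : (-(β:ℂ)) = ((-β : ℝ) : ℂ) := by push_cast; ring
  rw [hcast, Complex.norm_cpow_real]

lemma aux_line_re (t : ℝ) : ((1 : ℂ) + t * Complex.I).re = 1 := by simp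

lemma aux_line_ne (t : ℝ) : ((1 : ℂ) + t * Complex.I) ≠ 0 := by
  intro h
  have := aux_line_re t
  rw [h] at this; simp at this

lemma aux_line_abs_ge_abs (t : ℝ) : |t| ≤ ‖(1:ℂ) + t * Complex.I‖ := by
  have : |((1:ℂ) + t * Complex.I).im| ≤ ‖(1:ℂ) + t * Complex.I‖ :=
    Complex.abs_im_le_norm _
  simpa using this

lemma aux_line_abs_ge_one (t : ℝ) : 1 ≤ ‖(1:ℂ) + t * Complex.I‖ := by
  have : |((1:ℂ) + t * Complex.I).re| ≤ ‖(1:ℂ) + t * Complex.I‖ :=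
    Complex.abs_re_le_norm _
  simpa using this

lemma aux_decay_bound {β c : ℝ} (hβ0 : 0 < β) (hβ1 : β < 1) (hc : 0 < c)
    {t : ℝ} (ht : t ≠ 0) (hbig : 3 * c * |t| ^ (-β) ≤ 1) :
    ‖1 - (1 + ((1:ℂ) + t * Complex.I) ^ (-(β:ℂ))) ^ (-(c:ℂ))‖ ≤ 6 * c * |t| ^ (-β) := by
  set z : ℂ := (1:ℂ) + t * Complex.I
  have hw : 0 < (z ^ (-(β:ℂ))).re := aux_re_cpow_pos hβ0 hβ1 (by rw [aux_line_re]; norm_num)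
  have hnorm : ‖z ^ (-(β:ℂ))‖ ≤ |t| ^ (-β) := by
    rw [aux_norm_cpow_neg_real (aux_line_ne t)]
    exact Real.rpow_le_rpow_of_nonpos (abs_pos.2 ht) (aux_line_abs_ge_abs t) (by linarith)
  have h := aux_key_small hc hw (le_trans (by nlinarith [norm_nonneg (z ^ (-(β:ℂ)))]) hbig)
  nlinarith [norm_nonneg (z ^ (-(β:ℂ)))]

lemma aux_xexp_le {s x : ℝ} (hs : 0 < s) (hx : 0 ≤ x) :
    x * Real.exp (-(s * x)) ≤ 1 / s := by
  rw [Real.exp_neg, ← div_eq_mul_inv, div_le_div_iff₀ (Real.exp_pos _) hs]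
  nlinarith [Real.add_one_le_exp (s * x)]

lemma aux_psi_diff (μ : Measure ℝ) [IsProbabilityMeasure μ] (hsupp : μ (Set.Iic 0) = 0) :
    DifferentiableOn ℂ (fun z : ℂ => ∫ x, Complex.exp (-(z * x)) ∂μ) {z : ℂ | 0 < z.re} := by
  have hae : ∀ᵐ x ∂μ, 0 < x := by
    rw [ae_iff]
    convert hsupp using 2
    ext x; simp
  have hmeas : ∀ z : ℂ, AEStronglyMeasurable (fun x : ℝ => Complex.exp (-(z * x))) μ := by
    intro z
    exact ((continuous_const.mul Complex.continuous_ofReal).neg.cexp).aestronglyMeasurable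
  have hre : ∀ (z : ℂ) (x : ℝ), ‖Complex.exp (-(z * x))‖ = Real.exp (-(z.re * x)) := by
    intro z x
    rw [Complex.norm_exp]
    congr 1
    simp [Complex.mul_re]
  intro z₀ hz₀
  have hz₀' : 0 < z₀.re := hz₀
  set s : ℝ := z₀.re / 2 with hs
  have hspos : 0 < s := by positivity
  have key := hasDerivAt_integral_of_dominated_loc_of_deriv_le (μ := μ)
      (F := fun (z : ℂ) (x : ℝ) => Complex.exp (-(z * x)))
      (F' := fun (z : ℂ) (x : ℝ) => -(x : ℂ) * Complex.exp (-(z * x)))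
      (x₀ := z₀) (bound := fun _ => 1 / s) (s := ball z₀ s)
      (ball_mem_nhds z₀ hspos)
      (Filter.Eventually.of_forall fun z => hmeas z)
      ?hint ?hmeas' ?hbound (integrable_const _) ?hdiff
  · exact key.2.differentiableAt.differentiableWithinAt
  case hint =>
    apply Integrable.mono' (integrable_const (1:ℝ)) (hmeas z₀)
    filter_upwards [hae] with x hx
    rw [hre]
    rw [Real.exp_le_one_iff]
    nlinarith
  case hmeas' =>
    exact ((Complex.continuous_ofReal.neg).mul
      ((continuous_const.mul Complex.continuous_ofReal).neg.cexp)).aestronglyMeasurable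
  case hbound =>
    filter_upwards [hae] with x hx
    intro z hz
    have hzre : s ≤ z.re := by
      have h1 : |(z - z₀).re| ≤ ‖z - z₀‖ := Complex.abs_re_le_norm _
      have h2 : ‖z - z₀‖ < s := by rwa [mem_ball, dist_eq_norm] at hz
      have := abs_lt.1 (lt_of_le_of_lt h1 h2)
      simp only [Complex.sub_re] at this
      rw [hs]; linarith [this.1]
    rw [norm_mul, hre]
    have h3 : ‖-(x:ℂ)‖ = x := by
      rw [norm_neg, Complex.norm_real, Real.norm_eq_abs, _root_.abs_of_pos hx]
    rw [h3]
    calc x * Real.exp (-(z.re * x)) ≤ x * Real.exp (-(s * x)) := by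
          apply mul_le_mul_of_nonneg_left _ (le_of_lt hx)
          apply Real.exp_le_exp.2
          nlinarith
      _ ≤ 1 / s := aux_xexp_le hspos (le_of_lt hx)
  case hdiff =>
    apply Filter.Eventually.of_forall
    intro x z _
    have h1 : HasDerivAt (fun z : ℂ => -(z * x)) (-(x:ℂ)) z := by
      exact (hasDerivAt_mul_const (x:ℂ) (x := z)).fun_neg
    have h2 := h1.cexp
    convert h2 using 1
    · rfl
    ring

lemma aux_eq_on_halfplane {β c : ℝ} (hβ0 : 0 < β) (hβ1 : β < 1) (hc : 0 < c)
    (μ : Measure ℝ) [IsProbabilityMeasure μ] (hsupp : μ (Set.Iic 0) = 0)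
    (hL : ∀ l : ℝ, 0 < l →
      ∫ x, Real.exp (-(l * x)) ∂μ = 1 - (1 + l ^ (-β)) ^ (-c)) :
    ∀ z : ℂ, 0 < z.re →
      ∫ x, Complex.exp (-(z * x)) ∂μ = 1 - (1 + z ^ (-(β:ℂ))) ^ (-(c:ℂ)) := by
  set S : Set ℂ := {z : ℂ | 0 < z.re} with hS
  have hSopen : IsOpen S := isOpen_lt continuous_const Complex.continuous_re
  have hSconn : IsPreconnected S := (convex_halfSpace_re_gt 0).isPreconnected
  have hψ : AnalyticOnNhd ℂ (fun z : ℂ => ∫ x, Complex.exp (-(z * x)) ∂μ) S :=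
    (aux_psi_diff μ hsupp).analyticOnNhd hSopen
  have hf : AnalyticOnNhd ℂ (fun z : ℂ => 1 - (1 + z ^ (-(β:ℂ))) ^ (-(c:ℂ))) S :=
    (aux_f_diff hβ0 hβ1).analyticOnNhd hSopen
  -- equality at positive reals
  have hkey : ∀ l : ℝ, 0 < l →
      ∫ x, Complex.exp (-((l:ℂ) * x)) ∂μ = 1 - (1 + (l:ℂ) ^ (-(β:ℂ))) ^ (-(c:ℂ)) := by
    intro l hl
    have h1 : ∀ x : ℝ, Complex.exp (-((l:ℂ) * x)) = ((Real.exp (-(l * x)) : ℝ) : ℂ) := by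
      intro x; rw [Complex.ofReal_exp]; push_cast; ring_nf
    have h2 : (∫ x, Complex.exp (-((l:ℂ) * x)) ∂μ)
        = ((∫ x, Real.exp (-(l * x)) ∂μ : ℝ) : ℂ) := by
      calc (∫ x, Complex.exp (-((l:ℂ) * x)) ∂μ)
          = ∫ x, ((Real.exp (-(l * x)) : ℝ) : ℂ) ∂μ :=
            integral_congr_ae (Filter.Eventually.of_forall fun x => h1 x)
        _ = ((∫ x, Real.exp (-(l * x)) ∂μ : ℝ) : ℂ) := integral_ofReal
    rw [h2, hL l hl]
    have h3 : ((l : ℂ) ^ (-(β:ℂ))) = ((l ^ (-β) : ℝ) : ℂ) := by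
      rw [Complex.ofReal_cpow (le_of_lt hl)]
      push_cast; ring_nf
    have h4 : ((1 : ℂ) + (l:ℂ) ^ (-(β:ℂ))) ^ (-(c:ℂ)) = (((1 + l ^ (-β)) ^ (-c) : ℝ) : ℂ) := by
      rw [h3]
      have h5 : ((1:ℂ) + ((l ^ (-β) : ℝ) : ℂ)) = (((1 + l ^ (-β) : ℝ)) : ℂ) := by push_cast; ring
      rw [h5, Complex.ofReal_cpow (by positivity)]
      push_cast; ring_nf
    rw [h4]
    push_cast; ring
  -- frequently near 1
  have hfreq : ∃ᶠ z in nhdsWithin (1:ℂ) {(1:ℂ)}ᶜ,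
      (fun z : ℂ => ∫ x, Complex.exp (-(z * x)) ∂μ) z
        = (fun z : ℂ => 1 - (1 + z ^ (-(β:ℂ))) ^ (-(c:ℂ))) z := by
    have htend : Filter.Tendsto (fun n : ℕ => ((1 + ((n:ℝ)+1)⁻¹ : ℝ) : ℂ)) Filter.atTop
        (nhdsWithin (1:ℂ) {(1:ℂ)}ᶜ) := by
      apply tendsto_nhdsWithin_of_tendsto_nhds_of_eventually_within
      · have : Filter.Tendsto (fun n : ℕ => (1 + ((n:ℝ)+1)⁻¹ : ℝ)) Filter.atTop (nhds 1) := by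
          have h6 : Filter.Tendsto (fun n : ℕ => ((n:ℝ)+1)⁻¹) Filter.atTop (nhds 0) :=
            tendsto_one_div_add_atTop_nhds_zero_nat.congr (by intro n; simp [one_div])
          simpa using (tendsto_const_nhds.add h6)
        rw [show ((1:ℂ)) = ((1:ℝ):ℂ) by norm_num]
        exact (Complex.continuous_ofReal.tendsto (1:ℝ)).comp this
      · apply Filter.Eventually.of_forall
        intro n
        simp only [Set.mem_compl_iff, Set.mem_singleton_iff]
        intro h
        have h7 : (1 + ((n:ℝ)+1)⁻¹ : ℝ) = 1 := by exact_mod_cast h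
        have : ((n:ℝ)+1)⁻¹ > 0 := by positivity
        linarith
    apply htend.frequently
    apply Filter.Frequently.of_forall
    intro n
    exact hkey _ (by positivity)
  have heq := hψ.eqOn_of_preconnected_of_frequently_eq hf hSconn
    (show (1:ℂ) ∈ S by simp [hS]) hfreq
  intro z hz
  exact heq hz

lemma aux_norm_exp_line (t y : ℝ) :
    ‖Complex.exp ((1 + (t:ℂ) * Complex.I) * (y : ℂ))‖ = Real.exp y := by
  rw [Complex.norm_exp]
  congr 1
  simp [Complex.mul_re, Complex.add_re, Complex.add_im]

lemma aux_fubini (μ : Measure ℝ) [IsProbabilityMeasure μ] (hsupp : μ (Set.Iic 0) = 0)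
    (b T : ℝ) (hT : 0 < T) :
    ∫ t in Ioc (-T) T, Complex.exp ((1 + (t:ℂ) * Complex.I) * (b:ℂ))
        * (∫ x, Complex.exp (-((1 + (t:ℂ) * Complex.I) * x)) ∂μ)
      = ∫ x, (∫ t in Ioc (-T) T,
          Complex.exp ((1 + (t:ℂ) * Complex.I) * ((b - x : ℝ) : ℂ))) ∂μ := by
  have hstep : ∀ t : ℝ, Complex.exp ((1 + (t:ℂ) * Complex.I) * (b:ℂ))
      * (∫ x, Complex.exp (-((1 + (t:ℂ) * Complex.I) * x)) ∂μ)
      = ∫ x, Complex.exp ((1 + (t:ℂ) * Complex.I) * ((b - x : ℝ) : ℂ)) ∂μ := by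
    intro t
    rw [← MeasureTheory.integral_const_mul]
    apply MeasureTheory.integral_congr_ae
    apply Filter.Eventually.of_forall
    intro x
    show Complex.exp ((1 + (t:ℂ) * Complex.I) * (b:ℂ))
        * Complex.exp (-((1 + (t:ℂ) * Complex.I) * (x:ℂ)))
      = Complex.exp ((1 + (t:ℂ) * Complex.I) * ((b - x : ℝ) : ℂ))
    rw [← Complex.exp_add]
    congr 1
    push_cast
    ring
  rw [setIntegral_congr_fun measurableSet_Ioc (fun t _ => hstep t)]
  haveI : IsFiniteMeasure (volume.restrict (Ioc (-T) T)) :=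
    ⟨by rw [Measure.restrict_apply_univ]; exact measure_Ioc_lt_top⟩
  apply integral_integral_swap
  apply Integrable.mono' (integrable_const (Real.exp b))
  · have c1 : Continuous fun p : ℝ × ℝ => ((1:ℂ) + (p.1:ℂ) * Complex.I) :=
      continuous_const.add ((Complex.continuous_ofReal.comp continuous_fst).mul continuous_const)
    have c2 : Continuous fun p : ℝ × ℝ => ((b - p.2 : ℝ) : ℂ) :=
      Complex.continuous_ofReal.comp (continuous_const.sub continuous_snd)
    exact ((c1.mul c2).cexp).aestronglyMeasurable
  · have hprod : ∀ᵐ p : ℝ × ℝ ∂((volume.restrict (Ioc (-T) T)).prod μ), 0 < p.2 := by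
      rw [ae_iff]
      have hmeas : MeasurableSet {p : ℝ × ℝ | ¬ 0 < p.2} := by
        have : {p : ℝ × ℝ | ¬ 0 < p.2} = Prod.snd ⁻¹' (Set.Iic 0) := by
          ext p; simp
        rw [this]
        exact measurable_snd measurableSet_Iic
      rw [Measure.prod_apply hmeas]
      have : ∀ t : ℝ, μ (Prod.mk t ⁻¹' {p : ℝ × ℝ | ¬ 0 < p.2}) = 0 := by
        intro t
        have : Prod.mk t ⁻¹' {p : ℝ × ℝ | ¬ 0 < p.2} = Set.Iic 0 := by
          ext x; simp
        rw [this]; exact hsupp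
      simp only [this]
      simp
    filter_upwards [hprod] with p hp
    rw [Function.uncurry]
    rw [aux_norm_exp_line p.1 (b - p.2)]
    apply Real.exp_le_exp.2
    linarith

lemma aux_inner_ne (b x T : ℝ) (hT : 0 < T) (hxb : x ≠ b) :
    ∫ t in Ioc (-T) T, Complex.exp ((1 + (t:ℂ) * Complex.I) * ((b - x : ℝ) : ℂ))
      = Complex.exp ((b - x : ℝ) : ℂ) *
        ((Complex.exp ((Complex.I * ((b - x : ℝ) : ℂ)) * T)
          - Complex.exp ((Complex.I * ((b - x : ℝ) : ℂ)) * (-T)))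
          / (Complex.I * ((b - x : ℝ) : ℂ))) := by
  set c : ℂ := Complex.I * ((b - x : ℝ) : ℂ) with hc
  have hc0 : c ≠ 0 := by
    rw [hc]
    exact mul_ne_zero Complex.I_ne_zero
      (Complex.ofReal_ne_zero.2 (sub_ne_zero.2 (fun h => hxb h.symm)))
  have h1 : ∀ t : ℝ, Complex.exp ((1 + (t:ℂ) * Complex.I) * ((b - x : ℝ) : ℂ))
      = Complex.exp ((b - x : ℝ) : ℂ) * Complex.exp (c * t) := by
    intro t
    rw [← Complex.exp_add]
    congr 1
    rw [hc]; ring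
  rw [← intervalIntegral.integral_of_le (by linarith : -T ≤ T)]
  rw [intervalIntegral.integral_congr (fun t _ => h1 t)]
  rw [intervalIntegral.integral_const_mul]
  rw [integral_exp_mul_complex hc0]
  norm_cast

lemma aux_inner_eq (b T : ℝ) (hT : 0 < T) :
    ∫ t in Ioc (-T) T, Complex.exp ((1 + (t:ℂ) * Complex.I) * ((b - b : ℝ) : ℂ))
      = ((2 * T : ℝ) : ℂ) := by
  have h1 : ∀ t : ℝ, Complex.exp ((1 + (t:ℂ) * Complex.I) * ((b - b : ℝ) : ℂ)) = 1 := by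
    intro t; simp
  rw [setIntegral_congr_fun measurableSet_Ioc (fun t _ => h1 t)]
  rw [setIntegral_const]
  rw [Real.volume_real_Ioc_of_le (by linarith)]
  rw [Complex.real_smul]
  push_cast
  ring

lemma aux_inner_norm (b x T : ℝ) (hT : 0 < T) (hxb : x ≠ b) :
    ‖∫ t in Ioc (-T) T, Complex.exp ((1 + (t:ℂ) * Complex.I) * ((b - x : ℝ) : ℂ))‖
      ≤ Real.exp (b - x) * (2 / |b - x|) := by
  rw [aux_inner_ne b x T hT hxb]
  have hbx : b - x ≠ 0 := sub_ne_zero.2 (fun h => hxb h.symm)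
  rw [norm_mul]
  have h1 : ‖Complex.exp ((b - x : ℝ) : ℂ)‖ = Real.exp (b - x) := by
    rw [Complex.norm_exp]; simp
  rw [h1]
  apply mul_le_mul_of_nonneg_left _ (le_of_lt (Real.exp_pos _))
  rw [norm_div]
  have h2 : ∀ s : ℝ, ‖Complex.exp ((Complex.I * ((b - x : ℝ) : ℂ)) * s)‖ = 1 := by
    intro s
    rw [Complex.norm_exp]
    have : ((Complex.I * ((b - x : ℝ) : ℂ)) * s).re = 0 := by
      simp [Complex.mul_re]
    rw [this, Real.exp_zero]
  have h3 : ‖Complex.I * ((b - x : ℝ) : ℂ)‖ = |b - x| := by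
    rw [norm_mul, Complex.norm_I,
      Complex.norm_real, Real.norm_eq_abs, one_mul]
  rw [h3]
  gcongr
  calc ‖Complex.exp ((Complex.I * ((b - x : ℝ) : ℂ)) * T)
        - Complex.exp ((Complex.I * ((b - x : ℝ) : ℂ)) * (-T))‖
      ≤ ‖Complex.exp ((Complex.I * ((b - x : ℝ) : ℂ)) * T)‖
        + ‖Complex.exp ((Complex.I * ((b - x : ℝ) : ℂ)) * (-T))‖ := norm_sub_le _ _
    _ ≤ 2 := by
        have e2 : ‖Complex.exp (Complex.I * ((b - x : ℝ) : ℂ) * -(T:ℂ))‖ = 1 := by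
          rw [show (-(T:ℂ)) = ((-T : ℝ) : ℂ) by norm_cast]; exact h2 (-T)
        rw [h2 T] at *
        rw [e2]; norm_num

lemma aux_tendsto_atom (μ : Measure ℝ) [IsProbabilityMeasure μ] (hsupp : μ (Set.Iic 0) = 0)
    (b : ℝ) :
    Filter.Tendsto (fun T : ℝ => (2*T)⁻¹ • ∫ x, (∫ t in Ioc (-T) T,
        Complex.exp ((1 + (t:ℂ) * Complex.I) * ((b - x : ℝ) : ℂ))) ∂μ)
      Filter.atTop (nhds (((μ {b}).toReal : ℂ))) := by
  have hae : ∀ᵐ x ∂μ, 0 < x := by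
    rw [ae_iff]
    convert hsupp using 2
    ext x; simp
  set inner : ℝ → ℝ → ℂ := fun T x => ∫ t in Ioc (-T) T,
    Complex.exp ((1 + (t:ℂ) * Complex.I) * ((b - x : ℝ) : ℂ)) with hinner
  have hsmul : ∀ T : ℝ, (2*T)⁻¹ • ∫ x, inner T x ∂μ
      = ∫ x, (2*T)⁻¹ • inner T x ∂μ := fun T => (MeasureTheory.integral_smul _ _).symm
  have hlimit : (((μ {b}).toReal : ℂ))
      = ∫ x, Set.indicator {b} (fun _ => (1:ℂ)) x ∂μ := by
    rw [integral_indicator_const (1:ℂ) (measurableSet_singleton b)]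
    simp [Measure.real]
  simp +zetaDelta only [hsmul]
  rw [hlimit]
  have hnormInner : ∀ T > 0, ∀ x : ℝ, ‖inner T x‖ ≤ 2 * T * Real.exp (b - x) := by
    intro T hT x
    calc ‖inner T x‖ ≤ ∫ t in Ioc (-T) T,
          ‖Complex.exp ((1 + (t:ℂ) * Complex.I) * ((b - x : ℝ) : ℂ))‖ :=
        norm_integral_le_integral_norm _
      _ = ∫ t in Ioc (-T) T, Real.exp (b - x) := by
          apply setIntegral_congr_fun measurableSet_Ioc
          intro t _; exact aux_norm_exp_line t (b - x)
      _ = (volume (Ioc (-T) T)).toReal * Real.exp (b - x) := by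
          rw [setIntegral_const]; rfl
      _ = 2 * T * Real.exp (b - x) := by
          rw [Real.volume_Ioc, ENNReal.toReal_ofReal (by linarith)]; ring
  apply MeasureTheory.tendsto_integral_filter_of_dominated_convergence (fun _ => Real.exp b)
  · -- measurability
    filter_upwards [Filter.eventually_gt_atTop (0:ℝ)] with T hT
    apply AEStronglyMeasurable.const_smul (c := (2*T)⁻¹) (f := fun x => inner T x)
    have hc : Continuous fun p : ℝ × ℝ =>
        Complex.exp ((1 + (p.2:ℂ) * Complex.I) * ((b - p.1 : ℝ) : ℂ)) := by
      have c1 : Continuous fun p : ℝ × ℝ => ((1:ℂ) + (p.2:ℂ) * Complex.I) :=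
        continuous_const.add ((Complex.continuous_ofReal.comp continuous_snd).mul
          continuous_const)
      have c2 : Continuous fun p : ℝ × ℝ => ((b - p.1 : ℝ) : ℂ) :=
        Complex.continuous_ofReal.comp (continuous_const.sub continuous_fst)
      exact (c1.mul c2).cexp
    exact (hc.aestronglyMeasurable (μ := μ.prod (volume.restrict (Ioc (-T) T)))
      ).integral_prod_right'
  · -- bound
    filter_upwards [Filter.eventually_gt_atTop (0:ℝ)] with T hT
    filter_upwards [hae] with x hx
    rw [norm_smul]
    have h1 : ‖(2*T)⁻¹‖ = (2*T)⁻¹ := by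
      rw [Real.norm_eq_abs, _root_.abs_of_pos (by positivity)]
    rw [h1]
    calc (2*T)⁻¹ * ‖inner T x‖ ≤ (2*T)⁻¹ * (2 * T * Real.exp (b - x)) := by
          apply mul_le_mul_of_nonneg_left (hnormInner T hT x) (by positivity)
      _ = Real.exp (b - x) := by field_simp
      _ ≤ Real.exp b := Real.exp_le_exp.2 (by linarith)
  · exact integrable_const _
  · -- pointwise limit
    apply Filter.Eventually.of_forall
    intro x
    by_cases hxb : x = b
    · subst hxb
      have : ∀ᶠ T in Filter.atTop, (2*T)⁻¹ • inner T x = Set.indicator {x} (fun _ => (1:ℂ)) x := by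
        filter_upwards [Filter.eventually_gt_atTop (0:ℝ)] with T hT
        rw [hinner]
        simp only
        rw [aux_inner_eq x T hT, Set.indicator_of_mem (Set.mem_singleton x)]
        rw [Complex.real_smul, ← Complex.ofReal_mul,
          inv_mul_cancel₀ (by positivity : (2*T:ℝ) ≠ 0), Complex.ofReal_one]
      exact Filter.Tendsto.congr' (this.mono fun T h => h.symm) tendsto_const_nhds
    · rw [Set.indicator_of_notMem (by simpa using hxb)]
      have hb1 : ∀ᶠ T in Filter.atTop, ‖(2*T)⁻¹ • inner T x‖
          ≤ (Real.exp (b - x) * (2 / |b - x|) / 2) * T⁻¹ := by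
        filter_upwards [Filter.eventually_gt_atTop (0:ℝ)] with T hT
        rw [norm_smul]
        have h1 : ‖(2*T)⁻¹‖ = (2*T)⁻¹ := by
          rw [Real.norm_eq_abs, _root_.abs_of_pos (by positivity)]
        rw [h1]
        have h2 := aux_inner_norm b x T hT hxb
        calc (2*T)⁻¹ * ‖inner T x‖ ≤ (2*T)⁻¹ * (Real.exp (b - x) * (2 / |b - x|)) := by
              apply mul_le_mul_of_nonneg_left h2 (by positivity)
          _ = (Real.exp (b - x) * (2 / |b - x|) / 2) * T⁻¹ := by
              field_simp
      have hb2 : Filter.Tendsto (fun T : ℝ => (Real.exp (b - x) * (2 / |b - x|) / 2) * T⁻¹)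
          Filter.atTop (nhds 0) := by
        have h3 := (tendsto_inv_atTop_zero (𝕜 := ℝ)).const_mul
          (Real.exp (b - x) * (2 / |b - x|) / 2)
        simpa using h3
      exact squeeze_zero_norm' hb1 hb2

lemma aux_decay_tendsto {β c : ℝ} (hβ0 : 0 < β) (hβ1 : β < 1) (hc : 0 < c) (b : ℝ) :
    Filter.Tendsto (fun T : ℝ => (2*T)⁻¹ • ∫ t in Ioc (-T) T,
      Complex.exp ((1 + (t:ℂ) * Complex.I) * (b:ℂ)) *
        (1 - (1 + ((1:ℂ) + (t:ℂ) * Complex.I) ^ (-(β:ℂ))) ^ (-(c:ℂ))))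
      Filter.atTop (nhds 0) := by
  set g : ℝ → ℂ := fun t => Complex.exp ((1 + (t:ℂ) * Complex.I) * (b:ℂ)) *
      (1 - (1 + ((1:ℂ) + (t:ℂ) * Complex.I) ^ (-(β:ℂ))) ^ (-(c:ℂ))) with hg
  set φ : ℝ → ℝ := fun t =>
    ‖(1 : ℂ) - (1 + ((1:ℂ) + (t:ℂ) * Complex.I) ^ (-(β:ℂ))) ^ (-(c:ℂ))‖ with hφ
  have hnormg : ∀ t : ℝ, ‖g t‖ = Real.exp b * φ t := by
    intro t; rw [hg, norm_mul, aux_norm_exp_line t b]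
  have hlinemem : ∀ t : ℝ, ((1:ℂ) + (t:ℂ) * Complex.I) ∈ {z : ℂ | 0 < z.re} := by
    intro t; simp only [Set.mem_setOf_eq, aux_line_re]; norm_num
  -- φ ≤ 2
  have hφ2 : ∀ t : ℝ, φ t ≤ 2 := by
    intro t
    exact aux_key_crude hc (le_of_lt (aux_re_cpow_pos hβ0 hβ1 (hlinemem t)))
  -- continuity
  have hline : Continuous fun t : ℝ => ((1:ℂ) + (t:ℂ) * Complex.I) :=
    continuous_const.add (Complex.continuous_ofReal.mul continuous_const)
  have hSopen : IsOpen {z : ℂ | 0 < z.re} := isOpen_lt continuous_const Complex.continuous_re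
  have hfc : Continuous fun t : ℝ =>
      ((1:ℂ) - (1 + ((1:ℂ) + (t:ℂ) * Complex.I) ^ (-(β:ℂ))) ^ (-(c:ℂ))) := by
    rw [continuous_iff_continuousAt]
    intro t
    have hdiff := (aux_f_diff hβ0 hβ1 (c := c)).differentiableAt
      (hSopen.mem_nhds (hlinemem t))
    exact ContinuousAt.comp (g := fun z : ℂ => 1 - (1 + z ^ (-(β:ℂ))) ^ (-(c:ℂ)))
      hdiff.continuousAt hline.continuousAt
  have hgcont : Continuous g := ((hline.mul continuous_const).cexp).mul hfc
  have hInt : ∀ a b' : ℝ, IntervalIntegrable g volume a b' :=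
    fun a b' => hgcont.intervalIntegrable a b'
  -- constants
  set R : ℝ := max ((3*c) ^ (β⁻¹)) 1 with hR
  have hR1 : (1:ℝ) ≤ R := le_max_right _ _
  have hR0 : (0:ℝ) < R := by linarith
  set D : ℝ := 6 * c * Real.exp b with hD
  have hD0 : 0 < D := by positivity
  -- decay bound for |t| ≥ R
  have hcond : ∀ t : ℝ, R ≤ |t| → ‖g t‖ ≤ D * |t| ^ (-β) := by
    intro t ht
    have habs0 : (0:ℝ) < |t| := by linarith
    have ht0 : t ≠ 0 := by intro h; rw [h] at habs0; simp at habs0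
    have h1 : 3 * c ≤ |t| ^ β := by
      have h2 : ((3*c) ^ (β⁻¹)) ^ β ≤ |t| ^ β :=
        Real.rpow_le_rpow (by positivity) (le_trans (le_max_left _ _) ht) (le_of_lt hβ0)
      rwa [← Real.rpow_mul (by positivity), inv_mul_cancel₀ (ne_of_gt hβ0),
        Real.rpow_one] at h2
    have h3 : 3 * c * |t| ^ (-β) ≤ 1 := by
      rw [Real.rpow_neg (le_of_lt habs0)]
      have h4 : (0:ℝ) < |t| ^ β := Real.rpow_pos_of_pos habs0 β
      rw [← div_eq_mul_inv, div_le_one h4]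
      linarith
    have h5 := aux_decay_bound hβ0 hβ1 hc ht0 h3
    rw [hnormg]
    calc Real.exp b * φ t ≤ Real.exp b * (6 * c * |t| ^ (-β)) := by
          apply mul_le_mul_of_nonneg_left _ (le_of_lt (Real.exp_pos b))
          exact h5
      _ = D * |t| ^ (-β) := by rw [hD]; ring
  -- main estimate for T ≥ R
  have hmain : ∀ T : ℝ, R ≤ T →
      ‖(2*T)⁻¹ • ∫ t in Ioc (-T) T, g t‖
        ≤ (2 * R * Real.exp b) * T⁻¹ + (D / (1 - β)) * T ^ (-β) := by
    intro T hT
    have hT0 : 0 < T := lt_of_lt_of_le hR0 hT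
    have hTR : -T ≤ T := by linarith
    -- convert to interval integral
    rw [← intervalIntegral.integral_of_le hTR]
    -- split
    have e1 : (∫ t in (-R)..R, g t) + (∫ t in R..T, g t) = ∫ t in (-R)..T, g t :=
      integral_add_adjacent_intervals (hInt _ _) (hInt _ _)
    have e2 : (∫ t in (-T)..(-R), g t) + (∫ t in (-R)..T, g t) = ∫ t in (-T)..T, g t :=
      integral_add_adjacent_intervals (hInt _ _) (hInt _ _)
    have hsplit : (∫ t in (-T)..T, g t)
        = (∫ t in (-T)..(-R), g t) + (∫ t in (-R)..R, g t) + (∫ t in R..T, g t) := by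
      rw [← e2, ← e1]; ring
    -- middle piece
    have hA1 : ‖∫ t in (-R)..R, g t‖ ≤ 2 * Real.exp b * (2 * R) := by
      have := intervalIntegral.norm_integral_le_of_norm_le_const
        (C := 2 * Real.exp b) (f := g) (a := -R) (b := R) ?_
      · calc ‖∫ t in (-R)..R, g t‖ ≤ 2 * Real.exp b * |R - (-R)| := this
          _ = 2 * Real.exp b * (2 * R) := by
              rw [_root_.sub_neg_eq_add, _root_.abs_of_pos (by linarith)]; ring
      · intro x _
        rw [hnormg]
        nlinarith [hφ2 x, Real.exp_pos b, (norm_nonneg ((1:ℂ) -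
          (1 + ((1:ℂ) + (x:ℂ) * Complex.I) ^ (-(β:ℂ))) ^ (-(c:ℂ)))), hφ2 x]
    -- rpow integral value
    have hrint : ∫ t in R..T, t ^ (-β) = (T ^ (-β+1) - R ^ (-β+1)) / (-β+1) :=
      integral_rpow (Or.inl (by linarith))
    have hrpos : 0 ≤ R ^ (-β+1) := Real.rpow_nonneg (le_of_lt hR0) _
    have hrbound : ∫ t in R..T, D * t ^ (-β) ≤ D * T ^ (-β+1) / (1-β) := by
      rw [intervalIntegral.integral_const_mul, hrint]
      have h1β : (0:ℝ) < -β + 1 := by linarith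
      have hstep : (T ^ (-β+1) - R ^ (-β+1)) / (-β+1) ≤ T ^ (-β+1) / (-β+1) := by
        have := mul_le_mul_of_nonneg_right (sub_le_self (T ^ (-β+1)) hrpos)
          (le_of_lt (inv_pos.2 h1β))
        simpa [div_eq_mul_inv] using this
      calc D * ((T ^ (-β+1) - R ^ (-β+1)) / (-β+1)) ≤ D * (T ^ (-β+1) / (-β+1)) :=
            mul_le_mul_of_nonneg_left hstep hD0.le
        _ = D * T ^ (-β+1) / (1-β) := by
            rw [show (1:ℝ)-β = -β+1 by ring]; ring
    -- integrability of majorants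
    have hmaj_cont : ContinuousOn (fun t : ℝ => D * t ^ (-β)) (Set.uIcc R T) := by
      apply ContinuousOn.mul continuousOn_const
      intro x hx
      rw [Set.uIcc_of_le hT] at hx
      exact (Real.continuousAt_rpow_const x (-β)
        (Or.inl (by intro h; rw [h] at hx; exact absurd hx.1 (by linarith)))).continuousWithinAt
    have hmaj_cont' : ContinuousOn (fun t : ℝ => D * |t| ^ (-β)) (Set.uIcc (-T) (-R)) := by
      apply ContinuousOn.mul continuousOn_const
      intro x hx
      rw [Set.uIcc_of_le (by linarith)] at hx
      have hx0 : x ≠ 0 := by intro h; rw [h] at hx; linarith [hx.2]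
      have habs : ContinuousAt (fun t : ℝ => |t| ^ (-β)) x := by
        apply ContinuousAt.comp (g := fun u : ℝ => u ^ (-β))
        · exact Real.continuousAt_rpow_const _ _ (Or.inl (by simpa using hx0))
        · exact continuous_abs.continuousAt
      exact habs.continuousWithinAt
    -- right piece
    have hA2 : ‖∫ t in R..T, g t‖ ≤ D * T ^ (-β+1) / (1-β) := by
      calc ‖∫ t in R..T, g t‖ ≤ ∫ t in R..T, ‖g t‖ :=
            intervalIntegral.norm_integral_le_integral_norm hT
        _ ≤ ∫ t in R..T, D * t ^ (-β) := by
            apply intervalIntegral.integral_mono_on hT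
              (hgcont.norm.intervalIntegrable _ _)
              (hmaj_cont.intervalIntegrable)
            intro x hx
            have : R ≤ |x| := le_trans hx.1 (le_abs_self x)
            calc ‖g x‖ ≤ D * |x| ^ (-β) := hcond x this
              _ = D * x ^ (-β) := by rw [_root_.abs_of_pos (by linarith [hx.1])]
        _ ≤ D * T ^ (-β+1) / (1-β) := hrbound
    -- left piece
    have hA3 : ‖∫ t in (-T)..(-R), g t‖ ≤ D * T ^ (-β+1) / (1-β) := by
      have hneg : (∫ t in (-T)..(-R), D * |t| ^ (-β)) = ∫ t in R..T, D * |t| ^ (-β) := by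
        have := intervalIntegral.integral_comp_neg (a := -T) (b := -R)
          (f := fun t : ℝ => D * |t| ^ (-β))
        simp only [abs_neg, neg_neg] at this
        exact this
      calc ‖∫ t in (-T)..(-R), g t‖ ≤ ∫ t in (-T)..(-R), ‖g t‖ :=
            intervalIntegral.norm_integral_le_integral_norm (by linarith)
        _ ≤ ∫ t in (-T)..(-R), D * |t| ^ (-β) := by
            apply intervalIntegral.integral_mono_on (by linarith)
              (hgcont.norm.intervalIntegrable _ _)
              (hmaj_cont'.intervalIntegrable)
            intro x hx
            exact hcond x (by rw [abs_of_nonpos (by linarith [hx.2])]; linarith [hx.2])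
        _ = ∫ t in R..T, D * |t| ^ (-β) := hneg
        _ = ∫ t in R..T, D * t ^ (-β) := by
            apply intervalIntegral.integral_congr
            intro x hx
            rw [Set.uIcc_of_le hT] at hx
            show D * |x| ^ (-β) = D * x ^ (-β)
            rw [_root_.abs_of_pos (by linarith [hx.1])]
        _ ≤ D * T ^ (-β+1) / (1-β) := hrbound
    -- combine
    have htotal : ‖∫ t in (-T)..T, g t‖
        ≤ 2 * Real.exp b * (2 * R) + 2 * (D * T ^ (-β+1) / (1-β)) := by
      rw [hsplit]
      calc ‖(∫ t in (-T)..(-R), g t) + (∫ t in (-R)..R, g t) + (∫ t in R..T, g t)‖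
          ≤ ‖(∫ t in (-T)..(-R), g t) + (∫ t in (-R)..R, g t)‖ + ‖∫ t in R..T, g t‖ :=
            norm_add_le _ _
        _ ≤ ‖∫ t in (-T)..(-R), g t‖ + ‖∫ t in (-R)..R, g t‖ + ‖∫ t in R..T, g t‖ := by
            have := norm_add_le (∫ t in (-T)..(-R), g t) (∫ t in (-R)..R, g t)
            linarith
        _ ≤ 2 * Real.exp b * (2 * R) + 2 * (D * T ^ (-β+1) / (1-β)) := by linarith
    rw [norm_smul]
    have h6 : ‖(2*T)⁻¹‖ = (2*T)⁻¹ := by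
      rw [Real.norm_eq_abs, _root_.abs_of_pos (by positivity)]
    rw [h6]
    have h7 : T ^ (-β+1) * T⁻¹ = T ^ (-β) := by
      rw [show T⁻¹ = T ^ (-1 : ℝ) by rw [Real.rpow_neg_one],
        ← Real.rpow_add hT0]
      norm_num
    calc (2*T)⁻¹ * ‖∫ t in (-T)..T, g t‖
        ≤ (2*T)⁻¹ * (2 * Real.exp b * (2 * R) + 2 * (D * T ^ (-β+1) / (1-β))) := by
          apply mul_le_mul_of_nonneg_left htotal (by positivity)
      _ = (2 * R * Real.exp b) * T⁻¹ + (D / (1 - β)) * (T ^ (-β+1) * T⁻¹) := by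
          ring
      _ = (2 * R * Real.exp b) * T⁻¹ + (D / (1 - β)) * T ^ (-β) := by rw [h7]
  -- conclude by squeezing
  have hb2 : Filter.Tendsto (fun T : ℝ =>
      (2 * R * Real.exp b) * T⁻¹ + (D / (1 - β)) * T ^ (-β)) Filter.atTop (nhds 0) := by
    have t1 := (tendsto_inv_atTop_zero (𝕜 := ℝ)).const_mul (2 * R * Real.exp b)
    have t2 := (tendsto_rpow_neg_atTop hβ0).const_mul (D / (1 - β))
    simpa using t1.add t2
  apply squeeze_zero_norm' _ hb2
  filter_upwards [Filter.eventually_ge_atTop R] with T hT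
  exact hmain T hT

/-- For `1 < α < 2`, the probability measure `μ` with Laplace transform
`λ ↦ 1 - (1 + λ^(1-α))^(-1/(α-1))` has no atoms, i.e. its distribution function
`F(x) = μ((0,x])` is continuous. -/
theorem stmt19 (α : ℝ) (hα1 : 1 < α) (hα2 : α < 2)
    (μ : Measure ℝ) [IsProbabilityMeasure μ] (hsupp : μ (Set.Iic 0) = 0)
    (hLaplace : ∀ l : ℝ, 0 < l →
      ∫ x, Real.exp (-(l * x)) ∂μ = 1 - (1 + l ^ (1 - α)) ^ (-(1 / (α - 1)))) :
    ∀ b : ℝ, μ {b} = 0 := by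
  intro b
  by_cases hb : b ≤ 0
  · refine measure_mono_null ?_ hsupp
    intro x hx
    simp only [Set.mem_singleton_iff] at hx
    subst hx
    simpa using hb
  push_neg at hb
  set β : ℝ := α - 1 with hβdef
  set c : ℝ := 1 / (α - 1) with hcdef
  have hβ0 : 0 < β := by rw [hβdef]; linarith
  have hβ1 : β < 1 := by rw [hβdef]; linarith
  have hc : 0 < c := by rw [hcdef]; positivity
  have hL' : ∀ l : ℝ, 0 < l →
      ∫ x, Real.exp (-(l * x)) ∂μ = 1 - (1 + l ^ (-β)) ^ (-c) := by
    intro l hl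
    rw [hLaplace l hl]
    have e1 : (1:ℝ) - α = -β := by rw [hβdef]; ring
    have e2 : -(1/(α-1)) = -c := by rw [hcdef]
    rw [e1, e2]
  have heq := aux_eq_on_halfplane hβ0 hβ1 hc μ hsupp hL'
  -- the averaged integral, two ways
  have hcongr : ∀ T : ℝ, 0 < T →
      (∫ t in Ioc (-T) T, Complex.exp ((1 + (t:ℂ) * Complex.I) * (b:ℂ)) *
        (1 - (1 + ((1:ℂ) + (t:ℂ) * Complex.I) ^ (-(β:ℂ))) ^ (-(c:ℂ))))
      = ∫ x, (∫ t in Ioc (-T) T,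
          Complex.exp ((1 + (t:ℂ) * Complex.I) * ((b - x : ℝ) : ℂ))) ∂μ := by
    intro T hT
    rw [← aux_fubini μ hsupp b T hT]
    apply setIntegral_congr_fun measurableSet_Ioc
    intro t _
    show Complex.exp ((1 + (t:ℂ) * Complex.I) * (b:ℂ)) *
        (1 - (1 + ((1:ℂ) + (t:ℂ) * Complex.I) ^ (-(β:ℂ))) ^ (-(c:ℂ)))
      = Complex.exp ((1 + (t:ℂ) * Complex.I) * (b:ℂ)) *
        (∫ x, Complex.exp (-(((1:ℂ) + (t:ℂ) * Complex.I) * x)) ∂μ)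
    rw [heq ((1:ℂ) + (t:ℂ) * Complex.I) (by rw [aux_line_re]; norm_num)]
  have h1 : Filter.Tendsto (fun T : ℝ => (2*T)⁻¹ • ∫ t in Ioc (-T) T,
      Complex.exp ((1 + (t:ℂ) * Complex.I) * (b:ℂ)) *
        (1 - (1 + ((1:ℂ) + (t:ℂ) * Complex.I) ^ (-(β:ℂ))) ^ (-(c:ℂ))))
      Filter.atTop (nhds (((μ {b}).toReal : ℂ))) := by
    apply Filter.Tendsto.congr' _ (aux_tendsto_atom μ hsupp b)
    filter_upwards [Filter.eventually_gt_atTop (0:ℝ)] with T hT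
    rw [hcongr T hT]
  have h2 := aux_decay_tendsto hβ0 hβ1 hc b
  have h3 : (((μ {b}).toReal : ℂ)) = 0 := tendsto_nhds_unique h1 h2
  have h4 : (μ {b}).toReal = 0 := by exact_mod_cast h3
  rcases (ENNReal.toReal_eq_zero_iff _).1 h4 with h5 | h5
  · exact h5
  · exact absurd h5 (measure_ne_top μ {b})
end
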